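/- arXiv:2406.04020 — 7 statements merged into one kernel-verified Lean document; each statement's English description precedes it below -/
import Mathlib

section
/- For every graph G, the edge open packing number of G is at most the independence number of G: ρ_e^o(G) ≤ α(G). -/
open SimpleGraph

/-- An edge open packing (EOP) set: a set `B` of edges of `G` such that no edge of `G`
(other than the two edges themselves) joins an endvertex of one edge of `B` to an
endvertex of another edge of `B`. -/
def IsEOPSet {V : Type*} (G : SimpleGraph V) (B : Set (Sym2 V)) : Prop :=
  B ⊆ G.edgeSet ∧ ∀ e₁ ∈ B, ∀ e₂ ∈ B, e₁ ≠ e₂ →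
    ∀ x ∈ e₁, ∀ y ∈ e₂, G.Adj x y → s(x, y) = e₁ ∨ s(x, y) = e₂

/-- An induced matching: a set `M` of edges of `G` such that no edge of `G` joins an
endvertex of one edge of `M` to an endvertex of another edge of `M` (this in particular
forces `M` to be a matching). -/
def IsInducedMatching {V : Type*} (G : SimpleGraph V) (M : Set (Sym2 V)) : Prop :=
  M ⊆ G.edgeSet ∧ ∀ e₁ ∈ M, ∀ e₂ ∈ M, e₁ ≠ e₂ →
    ∀ x ∈ e₁, ∀ y ∈ e₂, ¬ G.Adj x y

/-- The edge open packing number `ρₑᵒ(G)`. -/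
noncomputable def eopNum {V : Type*} (G : SimpleGraph V) : ℕ :=
  sSup {n | ∃ B : Finset (Sym2 V), IsEOPSet G ↑B ∧ B.card = n}

/-- The induced matching number `ν_I(G)`. -/
noncomputable def inducedMatchingNum {V : Type*} (G : SimpleGraph V) : ℕ :=
  sSup {n | ∃ M : Finset (Sym2 V), IsInducedMatching G ↑M ∧ M.card = n}

/-- The independence number `α(G)`. -/
noncomputable def indepNum {V : Type*} (G : SimpleGraph V) : ℕ :=
  sSup {n | ∃ S : Finset V, (∀ x ∈ S, ∀ y ∈ S, ¬ G.Adj x y) ∧ S.card = n}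

/-- The open packing number `ρᵒ(G)`: maximum size of a set of vertices whose open
neighborhoods are pairwise disjoint. -/
noncomputable def openPackNum {V : Type*} (G : SimpleGraph V) : ℕ :=
  sSup {n | ∃ P : Finset V,
    (∀ x ∈ P, ∀ y ∈ P, x ≠ y → ∀ z, ¬ (G.Adj x z ∧ G.Adj y z)) ∧ P.card = n}

/-- The 2-packing number `ρ₂(G)`: maximum size of a set of vertices pairwise at
distance greater than 2. -/
noncomputable def twoPackNum {V : Type*} (G : SimpleGraph V) : ℕ :=
  sSup {n | ∃ P : Finset V,
    (∀ x ∈ P, ∀ y ∈ P, x ≠ y →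
      ¬ G.Adj x y ∧ (∀ z, ¬ (G.Adj x z ∧ G.Adj z y))) ∧ P.card = n}

/-- The 3-packing number `ρ₃(G)`: maximum size of a set of vertices pairwise at
distance greater than 3. -/
noncomputable def threePackNum {V : Type*} (G : SimpleGraph V) : ℕ :=
  sSup {n | ∃ P : Finset V,
    (∀ x ∈ P, ∀ y ∈ P, x ≠ y →
      ¬ G.Adj x y ∧ (∀ z, ¬ (G.Adj x z ∧ G.Adj z y)) ∧
      (∀ z w, ¬ (G.Adj x z ∧ G.Adj z w ∧ G.Adj w y))) ∧ P.card = n}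

/-- Minimum degree of `G` (degrees measured via `Set.ncard` of neighborhoods). -/
noncomputable def minDeg {V : Type*} (G : SimpleGraph V) : ℕ :=
  sInf {d | ∃ v, d = (G.neighborSet v).ncard}

/-- The lexicographic product `G ∘ H`. -/
def lexProd {V W : Type*} (G : SimpleGraph V) (H : SimpleGraph W) :
    SimpleGraph (V × W) where
  Adj x y := G.Adj x.1 y.1 ∨ (x.1 = y.1 ∧ H.Adj x.2 y.2)
  symm := by
    constructor
    rintro ⟨g, h⟩ ⟨g', h'⟩ (hgg | ⟨rfl, hh⟩)
    · exact Or.inl hgg.symm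
    · exact Or.inr ⟨rfl, hh.symm⟩
  loopless := by
    constructor
    rintro ⟨g, h⟩ (hgg | ⟨-, hh⟩)
    · exact G.loopless.irrefl g hgg
    · exact H.loopless.irrefl h hh

/-- The direct (tensor) product `G × H`. -/
def tensorProd {V W : Type*} (G : SimpleGraph V) (H : SimpleGraph W) :
    SimpleGraph (V × W) where
  Adj x y := G.Adj x.1 y.1 ∧ H.Adj x.2 y.2
  symm := by constructor; rintro ⟨g, h⟩ ⟨g', h'⟩ ⟨h1, h2⟩; exact ⟨h1.symm, h2.symm⟩
  loopless := by constructor; rintro ⟨g, h⟩ ⟨h1, -⟩; exact G.loopless.irrefl g h1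

/-- The strong product `G ⊠ H`. -/
def strongProd {V W : Type*} (G : SimpleGraph V) (H : SimpleGraph W) :
    SimpleGraph (V × W) where
  Adj x y := x ≠ y ∧ (x.1 = y.1 ∨ G.Adj x.1 y.1) ∧ (x.2 = y.2 ∨ H.Adj x.2 y.2)
  symm := by
    constructor
    rintro x y ⟨hne, h1, h2⟩
    exact ⟨hne.symm, h1.imp Eq.symm (fun h => h.symm), h2.imp Eq.symm (fun h => h.symm)⟩
  loopless := by constructor; rintro x ⟨hne, -, -⟩; exact hne rfl

/-- The star `K_{1,r}` with center `none` and leaves `some i`. -/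
def starGraph (r : ℕ) : SimpleGraph (Option (Fin r)) :=
  SimpleGraph.fromRel (fun x _ => x = none)

/-- The spider `S^k`: obtained from `K_{1,k}` by subdividing every edge exactly once.
The center is `none`, `some (i, false)` are the support vertices and `some (i, true)`
the leaves. -/
def spiderGraph (k : ℕ) : SimpleGraph (Option (Fin k × Bool)) :=
  SimpleGraph.fromRel (fun x y =>
    (x = none ∧ ∃ i, y = some (i, false)) ∨
    (∃ i, x = some (i, false) ∧ y = some (i, true)))

/-- The `n`-dimensional hypercube `Q_n`: vertices are `Fin n → Bool`, adjacent iff they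
differ in exactly one coordinate. -/
def hypercube (n : ℕ) : SimpleGraph (Fin n → Bool) :=
  SimpleGraph.fromRel (fun x y =>
    (Finset.univ.filter (fun i => x i ≠ y i)).card = 1)

/-- The corona product `G ⊙ H`: vertices `(v, none)` form a copy of `G`, vertices
`(v, some h)` form a copy of `H` for each `v`, and `(v, none)` is joined to every
vertex of its copy of `H`. -/
def corona {V W : Type*} (G : SimpleGraph V) (H : SimpleGraph W) :
    SimpleGraph (V × Option W) :=
  SimpleGraph.fromRel (fun x y =>
    (x.2 = none ∧ y.2 = none ∧ G.Adj x.1 y.1) ∨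
    (x.1 = y.1 ∧ ∃ h h', x.2 = some h ∧ y.2 = some h' ∧ H.Adj h h') ∨
    (x.1 = y.1 ∧ x.2 = none ∧ ∃ h, y.2 = some h))

/-- The set of endvertices of the edges of `B`. -/
def supportSet {V : Type*} (B : Set (Sym2 V)) : Set V := {v | ∃ e ∈ B, v ∈ e}

/-!
Every edge of an EOP set `B` has a *private* endvertex, lying on no other edge of `B`: if
both ends `a`, `b` of `e` lay on other edges `e₁ ∋ a` and `e₂ ∋ b`, then `e` itself would be
an edge joining `e₁` and `e₂`, which the packing condition forbids. Private endvertices of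
distinct edges are nonadjacent, since an edge between them would have to be one of their two
packing edges, and that edge would then contain the other private endvertex. So choosing one
private endvertex per edge turns `B` into an independent set of the same size.
-/

namespace IsEOPSet

variable {V : Type*} {G : SimpleGraph V} {B : Set (Sym2 V)}

theorem exists_private_mem (hB : IsEOPSet G B) {e : Sym2 V} (he : e ∈ B) :
    ∃ v ∈ e, ∀ e' ∈ B, e' ≠ e → v ∉ e' := by
  induction e using Sym2.ind with
  | _ a b =>
  have hab : G.Adj a b := G.mem_edgeSet.1 (hB.1 he)
  by_cases ha : ∀ e' ∈ B, e' ≠ s(a, b) → a ∉ e'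
  · exact ⟨a, Sym2.mem_mk_left a b, ha⟩
  push Not at ha
  obtain ⟨e₁, he₁, hne₁, hae₁⟩ := ha
  refine ⟨b, Sym2.mem_mk_right a b, fun e₂ he₂ hne₂ hbe₂ => ?_⟩
  by_cases h12 : e₁ = e₂
  · subst h12
    exact hne₁ ((Sym2.mem_and_mem_iff hab.ne).1 ⟨hae₁, hbe₂⟩)
  · rcases hB.2 e₁ he₁ e₂ he₂ h12 a hae₁ b hbe₂ hab with h | h
    exacts [hne₁ h.symm, hne₂ h.symm]

theorem not_adj_of_private_mem (hB : IsEOPSet G B) {e₁ e₂ : Sym2 V} (he₁ : e₁ ∈ B)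
    (he₂ : e₂ ∈ B) (hne : e₁ ≠ e₂) {x y : V} (hx : x ∈ e₁) (hy : y ∈ e₂)
    (hx_priv : ∀ e' ∈ B, e' ≠ e₁ → x ∉ e') (hy_priv : ∀ e' ∈ B, e' ≠ e₂ → y ∉ e') :
    ¬ G.Adj x y := fun hxy => by
  rcases hB.2 e₁ he₁ e₂ he₂ hne x hx y hy hxy with h | h
  · exact hy_priv e₁ he₁ hne (h ▸ Sym2.mem_mk_right x y)
  · exact hx_priv e₂ he₂ hne.symm (h ▸ Sym2.mem_mk_left x y)

theorem exists_indep_card_eq {B : Finset (Sym2 V)} (hB : IsEOPSet G ↑B) :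
    ∃ S : Finset V, (∀ x ∈ S, ∀ y ∈ S, ¬ G.Adj x y) ∧ S.card = B.card := by
  classical
  choose f hf_mem hf_priv using fun e : B => hB.exists_private_mem (Finset.mem_coe.2 e.2)
  have hf_inj : Function.Injective f := fun e₁ e₂ h => by
    by_contra hne
    exact hf_priv e₂ e₁ e₁.2 (Subtype.coe_ne_coe.2 hne) (h ▸ hf_mem e₁)
  refine ⟨Finset.univ.image f, ?_, ?_⟩
  · simp only [Finset.mem_image, Finset.mem_univ, true_and]
    rintro _ ⟨e₁, rfl⟩ _ ⟨e₂, rfl⟩ hadj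
    have hne : (e₁ : Sym2 V) ≠ e₂ := fun h => hadj.ne (congrArg f (Subtype.ext h))
    exact hB.not_adj_of_private_mem e₁.2 e₂.2 hne (hf_mem e₁) (hf_mem e₂)
      (hf_priv e₁) (hf_priv e₂) hadj
  · rw [Finset.card_image_of_injective _ hf_inj, Finset.card_univ, Fintype.card_coe]

end IsEOPSet

theorem card_le_indepNum {V : Type*} [Fintype V] {G : SimpleGraph V} {S : Finset V}
    (hS : ∀ x ∈ S, ∀ y ∈ S, ¬ G.Adj x y) : S.card ≤ _root_.indepNum G :=
  le_csSup ⟨Fintype.card V, by rintro _ ⟨T, -, rfl⟩; exact T.card_le_univ⟩ ⟨S, hS, rfl⟩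

/-- For every graph `G`, `ρₑᵒ(G) ≤ α(G)`. -/
theorem stmt_3 {V : Type*} [Fintype V] (G : SimpleGraph V) :
    eopNum G ≤ _root_.indepNum G := by
  refine csSup_le' ?_
  rintro _ ⟨B, hB, rfl⟩
  obtain ⟨S, hS, hcard⟩ := hB.exists_indep_card_eq
  exact hcard ▸ card_le_indepNum hS
end

section
/- If B is an edge open packing set of a graph G, then the subgraph of G induced by the endvertices of the edges of B is a disjoint union of stars (every connected component is a star K_{1,r} for some r ≥ 1). -/
open SimpleGraph

/-!
Every edge of `G` between endvertices of `B` lies in `B`. So if such an edge `xy` had further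
neighbours `x - z` and `y - w` among them, it would join the two distinct edges `xz` and `yw`
of `B`. Hence in the induced subgraph every edge has an endvertex of degree one, and a graph
without isolated vertices in which every edge has such an endvertex is a disjoint union of
stars.
-/

namespace SimpleGraph

def IsPendantAt {W : Type*} (H : SimpleGraph W) (l c : W) : Prop :=
  ∀ z, H.Adj l z → z = c

variable {W : Type*} {H : SimpleGraph W}

lemma IsPendantAt.of_adj
    (hpend : ∀ x y, H.Adj x y → H.IsPendantAt x y ∨ H.IsPendantAt y x)
    {c l w : W} (hcl : H.Adj c l) (hl : H.IsPendantAt l c) (hcw : H.Adj c w) :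
    H.IsPendantAt w c := by
  rcases hpend c w hcw with hc | hw
  · rwa [← hc l hcl]
  · exact hw

lemma eq_or_adj_of_reachable
    (hpend : ∀ x y, H.Adj x y → H.IsPendantAt x y ∨ H.IsPendantAt y x)
    {c l v w : W} (hcl : H.Adj c l) (hl : H.IsPendantAt l c)
    (hv : v = c ∨ H.Adj c v) (hvw : H.Reachable v w) : w = c ∨ H.Adj c w := by
  rw [reachable_iff_reflTransGen] at hvw
  induction hvw with
  | refl => exact hv
  | tail _ hxy ih =>
    rcases ih with rfl | hcx
    · exact Or.inr hxy
    · exact Or.inl (IsPendantAt.of_adj hpend hcl hl hcx _ hxy)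

theorem exists_star_center
    (hpend : ∀ x y, H.Adj x y → H.IsPendantAt x y ∨ H.IsPendantAt y x)
    (hnoIso : ∀ v, ∃ w, H.Adj v w) (v : W) :
    ∃ c, H.Reachable v c ∧ (∃ w, H.Adj c w) ∧
      (∀ w, H.Reachable v w → w ≠ c → H.Adj c w) ∧
      (∀ x y, H.Reachable v x → H.Adj x y → x = c ∨ y = c) := by
  obtain ⟨c, l, hcl, hl, hv⟩ : ∃ c l, H.Adj c l ∧ H.IsPendantAt l c ∧ (v = c ∨ H.Adj c v) := by
    obtain ⟨u, hvu⟩ := hnoIso v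
    rcases hpend v u hvu with hv | hu
    · exact ⟨u, v, hvu.symm, hv, Or.inr hvu.symm⟩
    · exact ⟨v, u, hvu, hu, Or.inl rfl⟩
  have hstar : ∀ w, H.Reachable v w → w = c ∨ H.Adj c w :=
    fun _ => eq_or_adj_of_reachable hpend hcl hl hv
  refine ⟨c, ?_, ⟨l, hcl⟩, fun w hvw hwc => (hstar w hvw).resolve_left hwc, ?_⟩
  · rcases hv with rfl | hcv
    · rfl
    · exact hcv.symm.reachable
  · intro x y hvx hxy
    rcases hstar x hvx with hxc | hcx
    · exact Or.inl hxc
    · exact Or.inr (IsPendantAt.of_adj hpend hcl hl hcx y hxy)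

end SimpleGraph

namespace IsEOPSet

variable {V : Type*} {G : SimpleGraph V} {B : Set (Sym2 V)}

lemma exists_induce_adj (hB : IsEOPSet G B) (v : supportSet B) :
    ∃ w, (G.induce (supportSet B)).Adj v w := by
  obtain ⟨e, heB, hve⟩ := v.2
  obtain ⟨w, he⟩ := Sym2.mem_iff_exists.mp hve
  subst he
  exact ⟨⟨w, _, heB, Sym2.mem_mk_right _ w⟩, hB.1 heB⟩

lemma mk_mem_of_adj (hB : IsEOPSet G B) {x y : V} (hx : x ∈ supportSet B)
    (hy : y ∈ supportSet B) (hxy : G.Adj x y) : s(x, y) ∈ B := by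
  obtain ⟨e₁, he₁, hxe₁⟩ := hx
  obtain ⟨e₂, he₂, hye₂⟩ := hy
  by_cases h : e₁ = e₂
  · subst h
    rwa [(Sym2.mem_and_mem_iff hxy.ne).mp ⟨hxe₁, hye₂⟩] at he₁
  · rcases hB.2 e₁ he₁ e₂ he₂ h x hxe₁ y hye₂ hxy with h' | h' <;> rw [h'] <;> assumption

lemma eq_or_eq_of_adj_of_adj (hB : IsEOPSet G B) {x y z w : V}
    (hx : x ∈ supportSet B) (hy : y ∈ supportSet B) (hz : z ∈ supportSet B)
    (hw : w ∈ supportSet B) (hxy : G.Adj x y) (hxz : G.Adj x z) (hyw : G.Adj y w) :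
    z = y ∨ w = x := by
  by_contra! hne
  have hne' : s(x, z) ≠ s(y, w) := by
    rw [Ne, Sym2.eq_iff]
    rintro (⟨hxy', -⟩ | ⟨hxw, -⟩)
    exacts [hxy.ne hxy', hne.2 hxw.symm]
  rcases hB.2 _ (hB.mk_mem_of_adj hx hz hxz) _ (hB.mk_mem_of_adj hy hw hyw) hne' x
      (Sym2.mem_mk_left x z) y (Sym2.mem_mk_left y w) hxy with h | h
  · exact hne.1 (Sym2.congr_right.mp h).symm
  · exact hne.2 (Sym2.congr_left.mp (h.trans Sym2.eq_swap)).symm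

lemma induce_isPendantAt_or (hB : IsEOPSet G B) (x y : supportSet B)
    (hxy : (G.induce (supportSet B)).Adj x y) :
    (G.induce (supportSet B)).IsPendantAt x y ∨ (G.induce (supportSet B)).IsPendantAt y x := by
  by_contra! h
  simp only [IsPendantAt, not_forall] at h
  obtain ⟨⟨z, hxz, hzy⟩, w, hyw, hwx⟩ := h
  rcases hB.eq_or_eq_of_adj_of_adj x.2 y.2 z.2 w.2 hxy hxz hyw with h | h
  exacts [hzy (Subtype.ext h), hwx (Subtype.ext h)]

end IsEOPSet

/-- If `B` is an EOP set of `G`, then the subgraph of `G` induced by the endvertices of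
the edges of `B` is a disjoint union of stars: every connected component has a center `c`
which is adjacent to all other vertices of the component, every edge of the component is
incident with `c`, and the component contains at least one edge (i.e. it is `K_{1,r}`
with `r ≥ 1`). -/
theorem stmt_4 {V : Type*} (G : SimpleGraph V) (B : Set (Sym2 V)) (hB : IsEOPSet G B) :
    ∀ v : supportSet B, ∃ c : supportSet B,
      (G.induce (supportSet B)).Reachable v c ∧
      (∃ w, (G.induce (supportSet B)).Adj c w) ∧
      (∀ w, (G.induce (supportSet B)).Reachable v w → w ≠ c →
        (G.induce (supportSet B)).Adj c w) ∧
      (∀ x y, (G.induce (supportSet B)).Reachable v x →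
        (G.induce (supportSet B)).Adj x y → x = c ∨ y = c) := by
  exact exists_star_center hB.induce_isPendantAt_or hB.exists_induce_adj
end

section
/- For arbitrary graphs G and H, ρ_e^o(G × H) ≥ max{ ρ_e^o(G)·δ(H)·ρ^o(H), ρ_e^o(H)·δ(G)·ρ^o(G) }, where × is the direct product. -/
open SimpleGraph

/-!
Orient each edge of a maximum edge open packing `B` of `G` so that its tail lies on no other
edge of `B`; this is possible because at most one endvertex of an edge of `B` is shared with
another edge of `B`. Then no two heads and no two tails are adjacent, and a head is adjacent to a
tail only if they come from darts with the same head. For a maximum open packing `P` of `H`, the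
darts `(p, q)` with `p ∈ P` and `q ∼ p` satisfy the last condition as well, and there are at least
`|P| δ(H)` of them. Pairing a dart `(g, g')` of `G` with a dart `(h, h')` of `H` into the edge
`(g, h)(g', h')` of `G × H` therefore yields an edge open packing of size `|B| |P| δ(H)`. The other
term of the maximum follows from `G × H ≅ H × G`.
-/

section Extremal

variable {α : Type*} [Fintype α] {p : Finset α → Prop}

lemma bddAbove_card_setOf :
    BddAbove {n | ∃ t : Finset α, p t ∧ t.card = n} :=
  ⟨Fintype.card α, by rintro _ ⟨t, -, rfl⟩; exact t.card_le_univ⟩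

lemma card_le_sSup_card {s : Finset α} (hs : p s) :
    s.card ≤ sSup {n | ∃ t : Finset α, p t ∧ t.card = n} :=
  le_csSup bddAbove_card_setOf ⟨s, hs, rfl⟩

lemma exists_card_eq_sSup (h₀ : p ∅) :
    ∃ s : Finset α, p s ∧ s.card = sSup {n | ∃ t : Finset α, p t ∧ t.card = n} :=
  Nat.sSup_mem (s := {n | ∃ t : Finset α, p t ∧ t.card = n}) ⟨0, ∅, h₀, rfl⟩ bddAbove_card_setOf

end Extremal

section

variable {V W V' : Type*} {G : SimpleGraph V} {H : SimpleGraph W} {G' : SimpleGraph V'}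

lemma IsEOPSet.mem_or_mem_of_adj {B : Set (Sym2 V)} (hB : IsEOPSet G B) {e₁ e₂ : Sym2 V}
    (he₁ : e₁ ∈ B) (he₂ : e₂ ∈ B) (hne : e₁ ≠ e₂) {x y : V} (hx : x ∈ e₁) (hy : y ∈ e₂)
    (hxy : G.Adj x y) : y ∈ e₁ ∨ x ∈ e₂ :=
  (hB.2 e₁ he₁ e₂ he₂ hne x hx y hy hxy).imp
    (fun h : s(x, y) = e₁ => h ▸ Sym2.mem_mk_right x y)
    (fun h : s(x, y) = e₂ => h ▸ Sym2.mem_mk_left x y)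

/-- The darts with a common head form a star, and no edge joins the center of one star to a leaf
of another. -/
structure IsStarPacking (G : SimpleGraph V) (D : Set (V × V)) : Prop where
  adj : ∀ d ∈ D, G.Adj d.1 d.2
  fst_eq_of_adj : ∀ d ∈ D, ∀ d' ∈ D, G.Adj d.1 d'.2 → d.1 = d'.1

/-- An edge open packing, each edge oriented as a dart from head to tail. -/
structure IsEOPDarts (G : SimpleGraph V) (D : Set (V × V)) : Prop extends IsStarPacking G D where
  not_adj_fst : ∀ d ∈ D, ∀ d' ∈ D, ¬ G.Adj d.1 d'.1
  not_adj_snd : ∀ d ∈ D, ∀ d' ∈ D, ¬ G.Adj d.2 d'.2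

section Orientation

variable {B : Set (Sym2 V)}

lemma IsEOPSet.snd_not_mem_of_fst_mem (hB : IsEOPSet G B) {a b : V} (he : s(a, b) ∈ B)
    {e₁ e₂ : Sym2 V} (he₁ : e₁ ∈ B) (he₂ : e₂ ∈ B) (h₁ : e₁ ≠ s(a, b)) (h₂ : e₂ ≠ s(a, b))
    (ha : a ∈ e₁) : b ∉ e₂ := by
  intro hb
  have hab : a ≠ b := (hB.1 he).ne
  have : b ∈ e₁ ∨ a ∈ e₂ := by
    by_cases h : e₁ = e₂
    · exact .inl (h ▸ hb)
    · exact hB.mem_or_mem_of_adj he₁ he₂ h ha hb (hB.1 he)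
  rcases this with hb₁ | ha₂
  · exact h₁ (Sym2.eq_of_ne_mem hab ha hb₁ (Sym2.mem_mk_left a b) (Sym2.mem_mk_right a b))
  · exact h₂ (Sym2.eq_of_ne_mem hab ha₂ hb (Sym2.mem_mk_left a b) (Sym2.mem_mk_right a b))

lemma IsEOPSet.exists_orientation (hB : IsEOPSet G B) :
    ∃ o : Sym2 V → V × V, (∀ e, s((o e).1, (o e).2) = e) ∧
      ∀ e ∈ B, ∀ e' ∈ B, e' ≠ e → (o e).2 ∉ e' := by
  suffices ∀ e : Sym2 V, ∃ d : V × V, s(d.1, d.2) = e ∧ (e ∈ B → ∀ e' ∈ B, e' ≠ e → d.2 ∉ e') by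
    choose o ho using this
    exact ⟨o, fun e => (ho e).1, fun e he => (ho e).2 he⟩
  intro e
  induction e using Sym2.ind with
  | _ a b =>
    by_cases hshared : ∃ e₁ ∈ B, e₁ ≠ s(a, b) ∧ a ∈ e₁
    · obtain ⟨e₁, he₁, hne₁, ha⟩ := hshared
      exact ⟨(a, b), rfl, fun he e' he' hne' => hB.snd_not_mem_of_fst_mem he he₁ he' hne₁ hne' ha⟩
    · exact ⟨(b, a), Sym2.eq_swap, fun _ e' he' hne' ha => hshared ⟨e', he', hne', ha⟩⟩

lemma IsEOPSet.isEOPDarts_image (hB : IsEOPSet G B) {o : Sym2 V → V × V}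
    (ho : ∀ e, s((o e).1, (o e).2) = e) (htail : ∀ e ∈ B, ∀ e' ∈ B, e' ≠ e → (o e).2 ∉ e') :
    IsEOPDarts G (o '' B) := by
  have hfst (e : Sym2 V) : (o e).1 ∈ e := (ho e).subst (motive := ((o e).1 ∈ ·))
    (Sym2.mem_mk_left _ _)
  have hsnd (e : Sym2 V) : (o e).2 ∈ e := (ho e).subst (motive := ((o e).2 ∈ ·))
    (Sym2.mem_mk_right _ _)
  have hhead : ∀ e₁ ∈ B, ∀ e₂ ∈ B, e₁ ≠ e₂ → (o e₂).1 ∈ e₁ → (o e₂).1 = (o e₁).1 := by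
    intro e₁ he₁ e₂ he₂ hne h
    rw [← ho e₁, Sym2.mem_iff] at h
    exact h.resolve_right fun h' => htail e₁ he₁ e₂ he₂ (Ne.symm hne) (h' ▸ hfst e₂)
  refine ⟨⟨?_, ?_⟩, ?_, ?_⟩ <;> simp only [Set.forall_mem_image]
  · intro e he
    have := hB.1 he
    rwa [← ho e, mem_edgeSet] at this
  · intro e₁ he₁ e₂ he₂ h
    by_cases hne : e₁ = e₂
    · rw [hne]
    rcases hB.mem_or_mem_of_adj he₁ he₂ hne (hfst e₁) (hsnd e₂) h with h' | h'
    · exact absurd h' (htail e₂ he₂ e₁ he₁ hne)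
    · exact hhead e₂ he₂ e₁ he₁ (Ne.symm hne) h'
  · intro e₁ he₁ e₂ he₂ h
    by_cases hne : e₁ = e₂
    · exact h.ne (by rw [hne])
    rcases hB.mem_or_mem_of_adj he₁ he₂ hne (hfst e₁) (hfst e₂) h with h' | h'
    · exact h.ne (hhead e₁ he₁ e₂ he₂ hne h').symm
    · exact h.ne (hhead e₂ he₂ e₁ he₁ (Ne.symm hne) h')
  · intro e₁ he₁ e₂ he₂ h
    by_cases hne : e₁ = e₂
    · exact h.ne (by rw [hne])
    rcases hB.mem_or_mem_of_adj he₁ he₂ hne (hsnd e₁) (hsnd e₂) h with h' | h'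
    · exact htail e₂ he₂ e₁ he₁ hne h'
    · exact htail e₁ he₁ e₂ he₂ (Ne.symm hne) h'

lemma IsEOPSet.exists_isEOPDarts [DecidableEq V] {B : Finset (Sym2 V)} (hB : IsEOPSet G ↑B) :
    ∃ D : Finset (V × V), IsEOPDarts G ↑D ∧ D.card = B.card := by
  obtain ⟨o, ho, htail⟩ := hB.exists_orientation
  have hinj : Function.Injective o := fun e e' h => by rw [← ho e, ← ho e', h]
  exact ⟨B.image o, by simpa using hB.isEOPDarts_image ho htail, B.card_image_of_injective hinj⟩

end Orientation

section Darts

variable {D : Set (V × V)}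

lemma IsEOPDarts.isEOPSet_image (hD : IsEOPDarts G D) :
    IsEOPSet G ((fun d => s(d.1, d.2)) '' D) := by
  constructor
  · rintro _ ⟨d, hd, rfl⟩
    exact hD.adj d hd
  · rintro _ ⟨d, hd, rfl⟩ _ ⟨d', hd', rfl⟩ - x hx y hy hxy
    rw [Sym2.mem_iff] at hx hy
    rcases hx with rfl | rfl <;> rcases hy with rfl | rfl
    · exact absurd hxy (hD.not_adj_fst d hd d' hd')
    · exact .inr (by rw [hD.fst_eq_of_adj d hd d' hd' hxy])
    · exact .inl (by rw [hD.fst_eq_of_adj d' hd' d hd hxy.symm, Sym2.eq_swap])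
    · exact absurd hxy (hD.not_adj_snd d hd d' hd')

lemma IsEOPDarts.injOn_mk (hD : IsEOPDarts G D) : D.InjOn fun d => s(d.1, d.2) := by
  intro d hd d' hd' h
  rcases Sym2.eq_iff.1 h with ⟨h₁, h₂⟩ | ⟨h₁, h₂⟩
  · exact Prod.ext h₁ h₂
  · exact absurd (h₂ ▸ hD.adj d hd) (hD.not_adj_fst d hd d' hd')

lemma IsEOPDarts.card_le_eopNum [Fintype V] [DecidableEq V] {D : Finset (V × V)}
    (hD : IsEOPDarts G ↑D) : D.card ≤ eopNum G := by
  rw [← Finset.card_image_of_injOn hD.injOn_mk]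
  exact card_le_sSup_card (p := fun B : Finset (Sym2 V) => IsEOPSet G ↑B)
    (by simpa using hD.isEOPSet_image)

lemma exists_isEOPDarts_card_eq_eopNum [Fintype V] [DecidableEq V] (G : SimpleGraph V) :
    ∃ D : Finset (V × V), IsEOPDarts G ↑D ∧ D.card = eopNum G := by
  obtain ⟨B, hB, hcard⟩ := exists_card_eq_sSup (p := fun B : Finset (Sym2 V) => IsEOPSet G ↑B)
    (by simp [IsEOPSet])
  obtain ⟨D, hD, hDcard⟩ := IsEOPSet.exists_isEOPDarts hB
  exact ⟨D, hD, hDcard.trans hcard⟩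

lemma IsEOPDarts.map (hD : IsEOPDarts G D) (φ : G ≃g G') : IsEOPDarts G' (Prod.map φ φ '' D) := by
  refine ⟨⟨?_, ?_⟩, ?_, ?_⟩ <;> simp only [Set.forall_mem_image, Prod.map_fst, Prod.map_snd,
    φ.map_adj_iff, EmbeddingLike.apply_eq_iff_eq]
  exacts [hD.adj, hD.fst_eq_of_adj, hD.not_adj_fst, hD.not_adj_snd]

lemma eopNum_le_of_iso [Fintype V] [Fintype V'] (φ : G ≃g G') : eopNum G ≤ eopNum G' := by
  classical
  obtain ⟨D, hD, hcard⟩ := exists_isEOPDarts_card_eq_eopNum G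
  have hD' : IsEOPDarts G' ↑(D.map (φ.toEquiv.prodCongr φ.toEquiv).toEmbedding) := by
    simpa using hD.map φ
  simpa [hcard] using hD'.card_le_eopNum

/-- Darts `(g, g')` of `G` and `(h, h')` of `H` combine to the dart `((g, h), (g', h'))` of
`G × H`. -/
lemma IsEOPDarts.tensorProd (hD : IsEOPDarts G D) {S : Set (W × W)} (hS : IsStarPacking H S) :
    IsEOPDarts (tensorProd G H) (Equiv.prodProdProdComm V V W W '' D ×ˢ S) := by
  refine ⟨⟨?_, ?_⟩, ?_, ?_⟩
  · rintro _ ⟨⟨d, t⟩, ⟨hd, ht⟩, rfl⟩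
    exact ⟨hD.adj d hd, hS.adj t ht⟩
  · rintro _ ⟨⟨d, t⟩, ⟨hd, ht⟩, rfl⟩ _ ⟨⟨d', t'⟩, ⟨hd', ht'⟩, rfl⟩ ⟨hG, hH⟩
    exact Prod.ext (hD.fst_eq_of_adj d hd d' hd' hG) (hS.fst_eq_of_adj t ht t' ht' hH)
  · rintro _ ⟨⟨d, t⟩, ⟨hd, -⟩, rfl⟩ _ ⟨⟨d', t'⟩, ⟨hd', -⟩, rfl⟩ ⟨hG, -⟩
    exact hD.not_adj_fst d hd d' hd' hG
  · rintro _ ⟨⟨d, t⟩, ⟨hd, -⟩, rfl⟩ _ ⟨⟨d', t'⟩, ⟨hd', -⟩, rfl⟩ ⟨hG, -⟩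
    exact hD.not_adj_snd d hd d' hd' hG

end Darts

section OpenPacking

def IsOpenPacking (H : SimpleGraph W) (P : Set W) : Prop :=
  ∀ x ∈ P, ∀ y ∈ P, x ≠ y → ∀ z, ¬ (H.Adj x z ∧ H.Adj y z)

lemma exists_isOpenPacking_card_eq_openPackNum [Fintype W] (H : SimpleGraph W) :
    ∃ P : Finset W, IsOpenPacking H ↑P ∧ P.card = openPackNum H :=
  exists_card_eq_sSup (p := fun P : Finset W => IsOpenPacking H ↑P) (by simp [IsOpenPacking])

lemma minDeg_le_degree (v : V) [Fintype (G.neighborSet v)] : minDeg G ≤ G.degree v :=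
  Nat.sInf_le ⟨v, by rw [← card_neighborFinset_eq_degree, ← Set.ncard_coe_finset,
    coe_neighborFinset]⟩

lemma IsOpenPacking.isStarPacking {P : Set W} (hP : IsOpenPacking H P) :
    IsStarPacking H {d | d.1 ∈ P ∧ H.Adj d.1 d.2} :=
  ⟨fun _ hd => hd.2, fun _ hd _ hd' h => by_contra fun hne => hP _ hd.1 _ hd'.1 hne _ ⟨h, hd'.2⟩⟩

lemma IsOpenPacking.exists_isStarPacking [Fintype W] {P : Finset W} (hP : IsOpenPacking H ↑P) :
    ∃ S : Finset (W × W), IsStarPacking H ↑S ∧ P.card * minDeg H ≤ S.card := by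
  classical
  refine ⟨(P.sigma fun p => H.neighborFinset p).map (Equiv.sigmaEquivProd W W).toEmbedding, ?_, ?_⟩
  · convert hP.isStarPacking
    ext ⟨p, q⟩
    simp
  · rw [Finset.card_map, Finset.card_sigma, ← smul_eq_mul]
    exact P.card_nsmul_le_sum _ _ fun p _ =>
      (minDeg_le_degree p).trans_eq (card_neighborFinset_eq_degree H p).symm

end OpenPacking

lemma eopNum_mul_minDeg_mul_openPackNum_le [Fintype V] [Fintype W]
    (G : SimpleGraph V) (H : SimpleGraph W) :
    eopNum G * minDeg H * openPackNum H ≤ eopNum (tensorProd G H) := by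
  classical
  obtain ⟨D, hD, hDcard⟩ := exists_isEOPDarts_card_eq_eopNum G
  obtain ⟨P, hP, hPcard⟩ := exists_isOpenPacking_card_eq_openPackNum H
  obtain ⟨S, hS, hScard⟩ := hP.exists_isStarPacking
  have hDS : IsEOPDarts (tensorProd G H)
      ↑((D ×ˢ S).map (Equiv.prodProdProdComm V V W W).toEmbedding) := by
    simpa using hD.tensorProd hS
  calc eopNum G * minDeg H * openPackNum H = D.card * (P.card * minDeg H) := by
        rw [hDcard, hPcard]; ring
    _ ≤ D.card * S.card := by gcongr
    _ = ((D ×ˢ S).map (Equiv.prodProdProdComm V V W W).toEmbedding).card := by simp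
    _ ≤ eopNum (tensorProd G H) := hDS.card_le_eopNum

def tensorProdComm (G : SimpleGraph V) (H : SimpleGraph W) : tensorProd G H ≃g tensorProd H G where
  toEquiv := Equiv.prodComm V W
  map_rel_iff' := and_comm

end

/-- For arbitrary graphs `G` and `H`,
`ρₑᵒ(G × H) ≥ max{ρₑᵒ(G)·δ(H)·ρᵒ(H), ρₑᵒ(H)·δ(G)·ρᵒ(G)}`. -/
theorem stmt_10 {V W : Type*} [Fintype V] [Fintype W]
    (G : SimpleGraph V) (H : SimpleGraph W) :
    max (eopNum G * minDeg H * openPackNum H) (eopNum H * minDeg G * openPackNum G) ≤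
      eopNum (tensorProd G H) :=
  max_le (eopNum_mul_minDeg_mul_openPackNum_le G H)
    ((eopNum_mul_minDeg_mul_openPackNum_le H G).trans (eopNum_le_of_iso (tensorProdComm H G)))
end

section
/- For m ≥ n ≥ 4, the induced matching number of the direct product of complete graphs satisfies ν_I(K_m × K_n) = 2. -/
open SimpleGraph

/-! In `K_α × K_β` two vertices are non-adjacent iff they agree in some coordinate. Hence the
only vertices non-adjacent to both ends of an edge `(a, b)(a', b')` are its ends and the two
vertices `(a, b')`, `(a', b)`, and the only other edge among these four is the cross edge
`(a, b')(a', b)`. So an induced matching containing a given edge can contain at most its cross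
edge besides, while an edge together with its cross edge is an induced matching. -/

theorem IsGreatest.inducedMatchingNum_eq {V : Type*} {G : SimpleGraph V} {k : ℕ}
    (h : IsGreatest {n | ∃ M : Finset (Sym2 V), IsInducedMatching G ↑M ∧ M.card = n} k) :
    inducedMatchingNum G = k :=
  h.csSup_eq

section CompleteTensor

variable {α β : Type*}

theorem tensorProd_top_adj {x y : α × β} :
    (tensorProd (⊤ : SimpleGraph α) (⊤ : SimpleGraph β)).Adj x y ↔ x.1 ≠ y.1 ∧ x.2 ≠ y.2 :=
  Iff.rfl

theorem tensorProd_top_edge_eq_or_eq_cross {u v x y : α × β}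
    (huv : (tensorProd (⊤ : SimpleGraph α) (⊤ : SimpleGraph β)).Adj u v)
    (hxy : (tensorProd (⊤ : SimpleGraph α) (⊤ : SimpleGraph β)).Adj x y)
    (hx : (x.1 = u.1 ∨ x.2 = u.2) ∧ (x.1 = v.1 ∨ x.2 = v.2))
    (hy : (y.1 = u.1 ∨ y.2 = u.2) ∧ (y.1 = v.1 ∨ y.2 = v.2)) :
    s(x, y) = s(u, v) ∨ s(x, y) = s((u.1, v.2), (v.1, u.2)) := by
  obtain ⟨a, b⟩ := u; obtain ⟨a', b'⟩ := v; obtain ⟨c, d⟩ := x; obtain ⟨c', d'⟩ := y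
  rw [tensorProd_top_adj] at huv hxy
  simp only at huv hxy hx hy ⊢
  obtain ⟨hx₁ | hx₁, hx₂ | hx₂⟩ := hx <;> obtain ⟨hy₁ | hy₁, hy₂ | hy₂⟩ := hy <;>
    subst_vars <;> simp_all

theorem IsInducedMatching.eq_cross_of_mem_tensorProd_top
    {M : Set (Sym2 (α × β))}
    (hM : IsInducedMatching (tensorProd (⊤ : SimpleGraph α) (⊤ : SimpleGraph β)) M)
    {u v : α × β} (huv : s(u, v) ∈ M) {e : Sym2 (α × β)} (he : e ∈ M) (hne : e ≠ s(u, v)) :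
    e = s((u.1, v.2), (v.1, u.2)) := by
  induction e using Sym2.ind with
  | h x y =>
    have hshare : ∀ z ∈ s(x, y), (z.1 = u.1 ∨ z.2 = u.2) ∧ (z.1 = v.1 ∨ z.2 = v.2) := by
      intro z hz
      have hu := hM.2 _ huv _ he hne.symm u (Sym2.mem_mk_left u v) z hz
      have hv := hM.2 _ huv _ he hne.symm v (Sym2.mem_mk_right u v) z hz
      rw [tensorProd_top_adj] at hu hv
      constructor <;> tauto
    exact (tensorProd_top_edge_eq_or_eq_cross (hM.1 huv) (hM.1 he)
      (hshare x (Sym2.mem_mk_left x y)) (hshare y (Sym2.mem_mk_right x y))).resolve_left hne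

theorem IsInducedMatching.card_le_two_of_tensorProd_top
    {M : Finset (Sym2 (α × β))}
    (hM : IsInducedMatching (tensorProd (⊤ : SimpleGraph α) (⊤ : SimpleGraph β)) ↑M) :
    M.card ≤ 2 := by
  classical
  obtain rfl | ⟨e, he⟩ := M.eq_empty_or_nonempty
  · simp
  induction e using Sym2.ind with
  | h u v =>
    have hsub : M ⊆ {s(u, v), s((u.1, v.2), (v.1, u.2))} := by
      intro e' he'
      by_cases hne : e' = s(u, v)
      · simp [hne]
      · simp [hM.eq_cross_of_mem_tensorProd_top he he' hne]
    exact (Finset.card_le_card hsub).trans Finset.card_le_two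

theorem isInducedMatching_tensorProd_top_cross_pair {a a' : α} {b b' : β}
    (ha : a ≠ a') (hb : b ≠ b') :
    IsInducedMatching (tensorProd (⊤ : SimpleGraph α) (⊤ : SimpleGraph β))
      {s((a, b), (a', b')), s((a, b'), (a', b))} := by
  refine ⟨?_, ?_⟩
  · rintro e (rfl | rfl) <;> exact ⟨ha, by simpa [eq_comm] using hb⟩
  · rintro e₁ (rfl | rfl) e₂ (rfl | rfl) hne x hx y hy <;>
      simp only [ne_eq, not_true_eq_false] at hne <;>
      rcases Sym2.mem_iff.mp hx with rfl | rfl <;> rcases Sym2.mem_iff.mp hy with rfl | rfl <;>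
      simp [tensorProd_top_adj]

theorem sym2_cross_pair_ne {a a' : α} {b b' : β} (ha : a ≠ a') (hb : b ≠ b') :
    s((a, b), (a', b')) ≠ s((a, b'), (a', b)) := by
  simp [ha, hb]

end CompleteTensor

/-- For `m ≥ n ≥ 4`, `ν_I(K_m × K_n) = 2`. -/
theorem stmt_11 (m n : ℕ) (h1 : 4 ≤ n) (h2 : n ≤ m) :
    inducedMatchingNum
      (tensorProd (⊤ : SimpleGraph (Fin m)) (⊤ : SimpleGraph (Fin n))) = 2 := by
  let a : Fin m := ⟨0, by omega⟩
  let a' : Fin m := ⟨1, by omega⟩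
  let b : Fin n := ⟨0, by omega⟩
  let b' : Fin n := ⟨1, by omega⟩
  have ha : a ≠ a' := by simp [a, a', Fin.ext_iff]
  have hb : b ≠ b' := by simp [b, b', Fin.ext_iff]
  refine IsGreatest.inducedMatchingNum_eq
    ⟨⟨{s((a, b), (a', b')), s((a, b'), (a', b))}, ?_, ?_⟩, ?_⟩
  · simpa using isInducedMatching_tensorProd_top_cross_pair ha hb
  · exact Finset.card_pair (sym2_cross_pair_ne ha hb)
  · rintro k ⟨M, hM, rfl⟩
    exact hM.card_le_two_of_tensorProd_top
end

section
/- For m ≥ n ≥ 3 with (m,n) ≠ (3,3), ρ_e^o(K_m × K_n) = m − 1, and ρ_e^o(K_3 × K_3) = 2. -/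
open SimpleGraph

/-! In `K_m × K_n` two vertices are non-adjacent iff they share a coordinate. If an edge open
packing contains two disjoint edges, the four cross pairs are non-adjacent, which forces the two
edges to be the diagonals of a rectangle, and then no third edge fits. Otherwise its edges
pairwise meet; they cannot form a triangle, so they form a star whose leaves are pairwise
non-adjacent neighbours of the centre, hence lie in one row or one column: there are at most
`max m n - 1` of them. The star with centre `(a₀, b₀)` and leaves `(a, b₁)`, `a ≠ a₀`,
attains `m - 1`. -/

namespace IsEOPSet

variable {V : Type*} {G : SimpleGraph V} {B : Set (Sym2 V)}

theorem eq_or_eq_of_mem_of_mem (hB : IsEOPSet G B) {e₁ e₂ : Sym2 V} (he₁ : e₁ ∈ B)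
    (he₂ : e₂ ∈ B) (hne : e₁ ≠ e₂) {x y : V} (hx : x ∈ e₁) (hy : y ∈ e₂)
    (hxy : s(x, y) ∈ B) : s(x, y) = e₁ ∨ s(x, y) = e₂ :=
  hB.2 e₁ he₁ e₂ he₂ hne x hx y hy (hB.1 hxy)

theorem not_adj_of_disjoint (hB : IsEOPSet G B) {e f : Sym2 V} (he : e ∈ B) (hf : f ∈ B)
    (hef : ∀ x ∈ e, x ∉ f) {x y : V} (hx : x ∈ e) (hy : y ∈ f) : ¬ G.Adj x y := by
  intro hxy
  have hne : e ≠ f := fun h => hef x hx (h ▸ hx)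
  rcases hB.2 e he f hf hne x hx y hy hxy with h | h
  · exact hef y (h ▸ Sym2.mem_mk_right x y) hy
  · exact hef x hx (h ▸ Sym2.mem_mk_left x y)

theorem mem_of_meets (hB : IsEOPSet G B) {e₁ e₂ g : Sym2 V} (he₁ : e₁ ∈ B) (he₂ : e₂ ∈ B)
    (hg : g ∈ B) (hne : e₁ ≠ e₂) {v : V} (hv₁ : v ∈ e₁) (hv₂ : v ∈ e₂)
    (hg₁ : ∃ p ∈ g, p ∈ e₁) (hg₂ : ∃ q ∈ g, q ∈ e₂) : v ∈ g := by
  by_contra hvg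
  obtain ⟨p, hpg, hp₁⟩ := hg₁
  obtain ⟨q, hqg, hq₂⟩ := hg₂
  have hpv : p ≠ v := fun h => hvg (h ▸ hpg)
  have hpq : p ≠ q := by
    rintro rfl
    exact hne (((Sym2.mem_and_mem_iff hpv).mp ⟨hp₁, hv₁⟩).trans
      ((Sym2.mem_and_mem_iff hpv).mp ⟨hq₂, hv₂⟩).symm)
  have hg_eq : g = s(p, q) := Sym2.eq_of_ne_mem hpq hpg hqg
    (Sym2.mem_mk_left p q) (Sym2.mem_mk_right p q)
  subst hg_eq
  rcases hB.eq_or_eq_of_mem_of_mem he₁ he₂ hne hp₁ hq₂ hg with h | h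
  · exact hvg (h ▸ hv₁)
  · exact hvg (h ▸ hv₂)

theorem not_adj_of_star (hB : IsEOPSet G B) {v x y : V} (hx : s(v, x) ∈ B) (hy : s(v, y) ∈ B)
    (hxy : x ≠ y) : ¬ G.Adj x y := by
  intro hadj
  have hne : s(v, x) ≠ s(v, y) := fun h => hxy (Sym2.congr_right.mp h)
  have hvx : v ≠ x := G.ne_of_adj (hB.1 hx)
  have hvy : v ≠ y := G.ne_of_adj (hB.1 hy)
  rcases hB.2 _ hx _ hy hne x (Sym2.mem_mk_right v x) y (Sym2.mem_mk_right v y) hadj with h | h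
  · rcases Sym2.eq_iff.mp h with ⟨-, h⟩ | ⟨-, h⟩
    · exact hxy h.symm
    · exact hvy h.symm
  · rcases Sym2.eq_iff.mp h with ⟨h, -⟩ | ⟨h, -⟩
    · exact hvx h.symm
    · exact hxy h

end IsEOPSet

theorem isEOPSet_star {V : Type*} {G : SimpleGraph V} {v : V} {L : Set V}
    (hadj : ∀ x ∈ L, G.Adj v x) (hind : ∀ x ∈ L, ∀ y ∈ L, ¬ G.Adj x y) :
    IsEOPSet G ((fun x => s(v, x)) '' L) := by
  refine ⟨?_, ?_⟩
  · rintro _ ⟨x, hx, rfl⟩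
    exact hadj x hx
  · rintro _ ⟨x, hx, rfl⟩ _ ⟨y, hy, rfl⟩ - p hp q hq hpq
    rcases Sym2.mem_iff.mp hp with rfl | rfl <;> rcases Sym2.mem_iff.mp hq with rfl | rfl
    · exact absurd hpq (G.loopless.irrefl _)
    · exact Or.inr rfl
    · exact Or.inl Sym2.eq_swap
    · exact absurd hpq (hind p hx q hy)

theorem card_eq_card_filter_of_forall_mem {V : Type*} [Fintype V] [DecidableEq V]
    {B : Finset (Sym2 V)} {v : V} (hv : ∀ e ∈ B, v ∈ e) :
    B.card = (Finset.univ.filter fun x => s(v, x) ∈ B).card := by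
  symm
  refine Finset.card_nbij (fun x => s(v, x)) (fun x hx => (Finset.mem_filter.mp hx).2)
    (fun x _ y _ h => Sym2.congr_right.mp h) ?_
  intro e he
  obtain ⟨x, rfl⟩ := Sym2.mem_iff_exists.mp (hv e he)
  exact ⟨x, by simpa using he, rfl⟩

section CompleteTensor

variable {α β : Type*}

theorem eq_or_eq_of_not_adj_of_not_adj {a₁ a₂ : α} {b₁ b₂ : β} (ha : a₁ ≠ a₂) (hb : b₁ ≠ b₂)
    {x : α × β} (hx₁ : x ≠ (a₁, b₁)) (hx₂ : x ≠ (a₂, b₂))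
    (h₁ : ¬ (tensorProd (⊤ : SimpleGraph α) (⊤ : SimpleGraph β)).Adj x (a₁, b₁))
    (h₂ : ¬ (tensorProd (⊤ : SimpleGraph α) (⊤ : SimpleGraph β)).Adj x (a₂, b₂)) :
    x = (a₁, b₂) ∨ x = (a₂, b₁) := by
  obtain ⟨a, b⟩ := x
  simp only [tensorProd_top_adj, ne_eq, Prod.mk.injEq, not_and, not_not] at *
  grind

variable {B : Set (Sym2 (α × β))}

theorem IsEOPSet.eq_diagonal_of_disjoint
    (hB : IsEOPSet (tensorProd (⊤ : SimpleGraph α) (⊤ : SimpleGraph β)) B)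
    {a₁ a₂ : α} {b₁ b₂ : β} (he : s((a₁, b₁), (a₂, b₂)) ∈ B) {f : Sym2 (α × β)} (hf : f ∈ B)
    (hef : ∀ x ∈ s((a₁, b₁), (a₂, b₂)), x ∉ f) : f = s((a₁, b₂), (a₂, b₁)) := by
  obtain ⟨ha, hb⟩ := tensorProd_top_adj.mp (hB.1 he)
  have corner : ∀ x ∈ f, x = (a₁, b₂) ∨ x = (a₂, b₁) := fun x hx =>
    eq_or_eq_of_not_adj_of_not_adj ha hb
      (fun h => hef x (h ▸ Sym2.mem_mk_left _ _) hx)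
      (fun h => hef x (h ▸ Sym2.mem_mk_right _ _) hx)
      (fun h => hB.not_adj_of_disjoint he hf hef (Sym2.mem_mk_left _ _) hx h.symm)
      (fun h => hB.not_adj_of_disjoint he hf hef (Sym2.mem_mk_right _ _) hx h.symm)
  induction f using Sym2.ind with | h p q => ?_
  have hpq : p ≠ q := (tensorProd ⊤ ⊤).ne_of_adj (hB.1 hf)
  rcases corner p (Sym2.mem_mk_left p q) with rfl | rfl <;>
    rcases corner q (Sym2.mem_mk_right _ q) with rfl | rfl
  · exact absurd rfl hpq
  · rfl
  · exact Sym2.eq_swap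
  · exact absurd rfl hpq

theorem IsEOPSet.eq_of_disjoint_of_disjoint
    (hB : IsEOPSet (tensorProd (⊤ : SimpleGraph α) (⊤ : SimpleGraph β)) B)
    {e f g : Sym2 (α × β)} (he : e ∈ B) (hf : f ∈ B) (hg : g ∈ B)
    (hef : ∀ x ∈ e, x ∉ f) (heg : ∀ x ∈ e, x ∉ g) : f = g := by
  obtain ⟨⟨⟨a₁, b₁⟩, ⟨a₂, b₂⟩⟩, rfl⟩ := e.exists_rep
  exact (hB.eq_diagonal_of_disjoint he hf hef).trans (hB.eq_diagonal_of_disjoint he hg heg).symm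

theorem IsEOPSet.eq_or_eq_of_disjoint
    (hB : IsEOPSet (tensorProd (⊤ : SimpleGraph α) (⊤ : SimpleGraph β)) B)
    {e f g : Sym2 (α × β)} (he : e ∈ B) (hf : f ∈ B) (hg : g ∈ B) (hef : ∀ x ∈ e, x ∉ f) :
    g = e ∨ g = f := by
  by_cases heg : ∀ x ∈ e, x ∉ g
  · exact Or.inr (hB.eq_of_disjoint_of_disjoint he hf hg hef heg).symm
  by_cases hfg : ∀ x ∈ f, x ∉ g
  · have hfe : ∀ x ∈ f, x ∉ e := fun x hxf hxe => hef x hxe hxf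
    exact Or.inl (hB.eq_of_disjoint_of_disjoint hf he hg hfe hfg).symm
  push Not at heg hfg
  obtain ⟨p, hpe, hpg⟩ := heg
  obtain ⟨q, hqf, hqg⟩ := hfg
  have hpq : p ≠ q := fun h => hef p hpe (h ▸ hqf)
  have hne : e ≠ f := fun h => hef p hpe (h ▸ hpe)
  obtain rfl : g = s(p, q) :=
    Sym2.eq_of_ne_mem hpq hpg hqg (Sym2.mem_mk_left p q) (Sym2.mem_mk_right p q)
  exact hB.eq_or_eq_of_mem_of_mem he hf hne hpe hqf hg

theorem forall_fst_eq_or_forall_snd_eq {L : Set (α × β)}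
    (hL : ∀ x ∈ L, ∀ y ∈ L, ¬ (tensorProd (⊤ : SimpleGraph α) (⊤ : SimpleGraph β)).Adj x y) :
    (∀ x ∈ L, ∀ y ∈ L, x.1 = y.1) ∨ (∀ x ∈ L, ∀ y ∈ L, x.2 = y.2) := by
  simp only [tensorProd_top_adj, not_and_or, not_not] at hL
  by_contra! h
  obtain ⟨⟨x, hx, y, hy, hxy⟩, ⟨z, hz, w, hw, hzw⟩⟩ := h
  grind

theorem card_le_of_adj_of_not_adj [Fintype α] [Fintype β] {v : α × β} {L : Finset (α × β)}
    (hadj : ∀ x ∈ L, (tensorProd (⊤ : SimpleGraph α) (⊤ : SimpleGraph β)).Adj v x)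
    (hind : ∀ x ∈ L, ∀ y ∈ L, ¬ (tensorProd (⊤ : SimpleGraph α) (⊤ : SimpleGraph β)).Adj x y) :
    L.card ≤ max (Fintype.card α) (Fintype.card β) - 1 := by
  classical
  rcases forall_fst_eq_or_forall_snd_eq hind with h | h
  · calc L.card ≤ (Finset.univ.erase v.2).card :=
          Finset.card_le_card_of_injOn Prod.snd
            (fun x hx => Finset.mem_erase.mpr ⟨(tensorProd_top_adj.mp (hadj x hx)).2.symm,
              Finset.mem_univ _⟩)
            (fun x hx y hy hxy => Prod.ext (h x hx y hy) hxy)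
      _ ≤ max (Fintype.card α) (Fintype.card β) - 1 := by
          rw [Finset.card_erase_of_mem (Finset.mem_univ _), Finset.card_univ]
          omega
  · calc L.card ≤ (Finset.univ.erase v.1).card :=
          Finset.card_le_card_of_injOn Prod.fst
            (fun x hx => Finset.mem_erase.mpr ⟨(tensorProd_top_adj.mp (hadj x hx)).1.symm,
              Finset.mem_univ _⟩)
            (fun x hx y hy hxy => Prod.ext hxy (h x hx y hy))
      _ ≤ max (Fintype.card α) (Fintype.card β) - 1 := by
          rw [Finset.card_erase_of_mem (Finset.mem_univ _), Finset.card_univ]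
          omega

theorem IsEOPSet.card_le [Fintype α] [Fintype β] {B : Finset (Sym2 (α × β))}
    (hB : IsEOPSet (tensorProd (⊤ : SimpleGraph α) (⊤ : SimpleGraph β)) ↑B)
    (h3 : 3 ≤ max (Fintype.card α) (Fintype.card β)) :
    B.card ≤ max (Fintype.card α) (Fintype.card β) - 1 := by
  classical
  by_cases hdisj : ∃ e ∈ B, ∃ f ∈ B, ∀ x ∈ e, x ∉ f
  · obtain ⟨e, he, f, hf, hef⟩ := hdisj
    have hsub : B ⊆ {e, f} := fun g hg => by
      simpa using hB.eq_or_eq_of_disjoint he hf hg hef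
    have := (Finset.card_le_card hsub).trans Finset.card_le_two
    omega
  push Not at hdisj
  rcases le_or_gt B.card 1 with hB1 | hB1
  · omega
  obtain ⟨e₁, he₁, e₂, he₂, hne⟩ := Finset.one_lt_card.mp hB1
  obtain ⟨v, hv₁, hv₂⟩ := hdisj e₁ he₁ e₂ he₂
  have hstar : ∀ g ∈ B, v ∈ g := fun g hg =>
    hB.mem_of_meets he₁ he₂ hg hne hv₁ hv₂ (hdisj g hg e₁ he₁) (hdisj g hg e₂ he₂)
  rw [card_eq_card_filter_of_forall_mem hstar]
  refine card_le_of_adj_of_not_adj (v := v) (fun x hx => hB.1 (Finset.mem_filter.mp hx).2) ?_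
  intro x hx y hy
  rcases eq_or_ne x y with rfl | hxy
  · exact SimpleGraph.irrefl _
  · exact hB.not_adj_of_star (Finset.mem_filter.mp hx).2 (Finset.mem_filter.mp hy).2 hxy

theorem exists_isEOPSet_card_eq [Fintype α] [Nonempty α] [Nontrivial β] :
    ∃ B : Finset (Sym2 (α × β)),
      IsEOPSet (tensorProd (⊤ : SimpleGraph α) (⊤ : SimpleGraph β)) ↑B ∧
        B.card = Fintype.card α - 1 := by
  classical
  obtain ⟨a₀⟩ := ‹Nonempty α›
  obtain ⟨b₀, b₁, hb⟩ := exists_pair_ne β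
  let L : Finset (α × β) := (Finset.univ.erase a₀).image (·, b₁)
  have hL : ∀ x ∈ L, x.1 ≠ a₀ ∧ x.2 = b₁ := by
    simp [L]
  refine ⟨L.image fun x => s((a₀, b₀), x), ?_, ?_⟩
  · rw [Finset.coe_image]
    refine isEOPSet_star (fun x hx => ?_) (fun x hx y hy hxy => ?_)
    · exact tensorProd_top_adj.mpr ⟨(hL x hx).1.symm, (hL x hx).2 ▸ hb⟩
    · exact (tensorProd_top_adj.mp hxy).2 ((hL x hx).2.trans (hL y hy).2.symm)
  · rw [Finset.card_image_of_injective _ fun x y h => Sym2.congr_right.mp h,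
      Finset.card_image_of_injective _ (Prod.mk_left_injective b₁),
      Finset.card_erase_of_mem (Finset.mem_univ _), Finset.card_univ]

theorem eopNum_tensorProd_top [Fintype α] [Fintype β] [Nontrivial β]
    (h3 : 3 ≤ Fintype.card α) (hβα : Fintype.card β ≤ Fintype.card α) :
    eopNum (tensorProd (⊤ : SimpleGraph α) (⊤ : SimpleGraph β)) = Fintype.card α - 1 := by
  have : Nonempty α := Fintype.card_pos_iff.mp (by omega)
  have hmax : max (Fintype.card α) (Fintype.card β) = Fintype.card α := max_eq_left hβα
  obtain ⟨B, hB, hcard⟩ := exists_isEOPSet_card_eq (α := α) (β := β)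
  refine IsGreatest.csSup_eq ⟨⟨B, hB, hcard⟩, ?_⟩
  rintro k ⟨C, hC, rfl⟩
  simpa [hmax] using hC.card_le (by omega)

end CompleteTensor

/-- For `m ≥ n ≥ 3` with `(m,n) ≠ (3,3)`, `ρₑᵒ(K_m × K_n) = m − 1`;
moreover `ρₑᵒ(K₃ × K₃) = 2`. -/
theorem stmt_12 (m n : ℕ) (h1 : 3 ≤ n) (h2 : n ≤ m) :
    (¬ (m = 3 ∧ n = 3) →
      eopNum (tensorProd (⊤ : SimpleGraph (Fin m)) (⊤ : SimpleGraph (Fin n))) = m - 1) ∧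
    eopNum (tensorProd (⊤ : SimpleGraph (Fin 3)) (⊤ : SimpleGraph (Fin 3))) = 2 := by
  have : Nontrivial (Fin n) := Fin.nontrivial_iff_two_le.mpr (by omega)
  refine ⟨fun _ => ?_, ?_⟩
  · simpa using eopNum_tensorProd_top (α := Fin m) (β := Fin n)
      (by rw [Fintype.card_fin]; omega) (by simpa using h2)
  · simpa using eopNum_tensorProd_top (α := Fin 3) (β := Fin 3) (by simp) le_rfl
end

section
/- For arbitrary graphs G and H, ρ_e^o(G ∘ H) ≤ min{ ρ_e^o(G ⊠ H), ρ_e^o(G □ H) }, where ∘, ⊠, □ denote the lexicographic, strong, and Cartesian products respectively. -/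
open SimpleGraph

/-!
The edges of an edge open packing `B` of `G ∘ H` form induced stars. A star either lies inside a
single fibre `{g} × W`, and then it is already a star of `G □ H`, or all its edges join the centre
`(g, h)` to other fibres. In the second case the leaves lying in one fibre `{g'} × W` have pairwise
non-adjacent `H`-coordinates, so the fibre with the most leaves provides an independent set `A`
of `H` into which the leaf levels of every other fibre inject. Moving each edge `(g, h)(g', h')`
of the star to `(g, a)(g', a)`, with `a ∈ A` its assigned level, yields an edge set of `G □ H` of
the same size that is an edge open packing of `G ⊠ H`, hence also of `G □ H`.
-/

section EdgeOpenPacking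

variable {V : Type*} {K K' : SimpleGraph V} {B : Set (Sym2 V)} {e f : Sym2 V}

def EOPSeparated (K : SimpleGraph V) (e f : Sym2 V) : Prop :=
  e ≠ f ∧ ∀ x ∈ e, ∀ y ∈ f, K.Adj x y → s(x, y) = e ∨ s(x, y) = f

theorem IsEOPSet.anti (hB : IsEOPSet K B) (hle : K' ≤ K) (hsub : B ⊆ K'.edgeSet) :
    IsEOPSet K' B :=
  ⟨hsub, fun e₁ he₁ e₂ he₂ hne x hx y hy hxy => hB.2 e₁ he₁ e₂ he₂ hne x hx y hy (hle hxy)⟩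

theorem IsEOPSet.mem_or_mem_of_adj_s13 (hB : IsEOPSet K B) (he : e ∈ B) (hf : f ∈ B)
    {x y : V} (hx : x ∈ e) (hy : y ∈ f) (hxy : K.Adj x y) : x ∈ f ∨ y ∈ e := by
  by_cases hef : e = f
  · exact Or.inr (hef ▸ hy)
  rcases hB.2 e he f hf hef x hx y hy hxy with h | h
  · exact Or.inr (h ▸ Sym2.mem_mk_right x y)
  · exact Or.inl (h ▸ Sym2.mem_mk_left x y)

theorem IsEOPSet.eq_of_mem_of_mem (hB : IsEOPSet K B) {f' : Sym2 V} (he : e ∈ B) (hf : f ∈ B)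
    (hf' : f' ∈ B) (hfe : f ≠ e) (hf'e : f' ≠ e) {v w : V} (hve : v ∈ e) (hvf : v ∈ f)
    (hwe : w ∈ e) (hwf' : w ∈ f') : v = w := by
  by_contra hvw
  have hev : e = s(v, w) := (Sym2.mem_and_mem_iff hvw).mp ⟨hve, hwe⟩
  have hadj : K.Adj v w := by simpa [hev] using hB.1 he
  rcases hB.mem_or_mem_of_adj_s13 hf hf' hvf hwf' hadj with h | h
  · exact hf'e (((Sym2.mem_and_mem_iff hvw).mp ⟨h, hwf'⟩).trans hev.symm)
  · exact hfe (((Sym2.mem_and_mem_iff hvw).mp ⟨hvf, h⟩).trans hev.symm)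

theorem IsEOPSet.eopSeparated (hB : IsEOPSet K B) (he : e ∈ B) (hf : f ∈ B) (hef : e ≠ f) :
    EOPSeparated K e f :=
  ⟨hef, hB.2 e he f hf hef⟩

theorem EOPSeparated.symm (h : EOPSeparated K e f) : EOPSeparated K f e :=
  ⟨h.1.symm, fun x hx y hy hxy => by
    rw [Sym2.eq_swap]
    exact (h.2 y hy x hx hxy.symm).symm⟩

theorem EOPSeparated.anti (h : EOPSeparated K e f) (hle : K' ≤ K) : EOPSeparated K' e f :=
  ⟨h.1, fun x hx y hy hxy => h.2 x hx y hy (hle hxy)⟩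

theorem Set.Pairwise.injOn_of_eopSeparated {U : Type*} {S : Set U} {φ : U → Sym2 V}
    (h : S.Pairwise fun e f => EOPSeparated K (φ e) (φ f)) : S.InjOn φ := by
  intro e he f hf hφ
  by_contra hef
  exact (h he hf hef).1 hφ

theorem Set.Pairwise.isEOPSet_image {U : Type*} {S : Set U} {φ : U → Sym2 V}
    (h : S.Pairwise fun e f => EOPSeparated K (φ e) (φ f)) (hsub : φ '' S ⊆ K.edgeSet) :
    IsEOPSet K (φ '' S) := by
  refine ⟨hsub, ?_⟩
  rintro _ ⟨e, he, rfl⟩ _ ⟨f, hf, rfl⟩ hne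
  exact (h he hf fun hef => hne (hef ▸ rfl)).2

open Classical in
/-- The edges of an EOP set form vertex-disjoint stars; `orient B e` lists the centre of the
star containing `e` first. -/
noncomputable def orient (B : Set (Sym2 V)) (e : Sym2 V) : V × V :=
  if h : ∃ p : V × V, s(p.1, p.2) = e ∧ ∃ f ∈ B, f ≠ e ∧ p.1 ∈ f then h.choose else e.out

noncomputable def starCenter (B : Set (Sym2 V)) (e : Sym2 V) : V := (orient B e).1

noncomputable def starLeaf (B : Set (Sym2 V)) (e : Sym2 V) : V := (orient B e).2

theorem mk_starCenter_starLeaf (B : Set (Sym2 V)) (e : Sym2 V) :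
    s(starCenter B e, starLeaf B e) = e := by
  unfold starCenter starLeaf orient
  split_ifs with h
  · exact h.choose_spec.1
  · exact Quot.out_eq e

theorem mem_iff_eq_starCenter_or_eq_starLeaf {x : V} :
    x ∈ e ↔ x = starCenter B e ∨ x = starLeaf B e := by
  conv_lhs => rw [← mk_starCenter_starLeaf B e]
  exact Sym2.mem_iff

theorem starCenter_mem (B : Set (Sym2 V)) (e : Sym2 V) : starCenter B e ∈ e :=
  mem_iff_eq_starCenter_or_eq_starLeaf.mpr (Or.inl rfl)

theorem starLeaf_mem (B : Set (Sym2 V)) (e : Sym2 V) : starLeaf B e ∈ e :=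
  mem_iff_eq_starCenter_or_eq_starLeaf.mpr (Or.inr rfl)

theorem eq_of_starCenter_eq_of_starLeaf_eq (hc : starCenter B e = starCenter B f)
    (hl : starLeaf B e = starLeaf B f) : e = f := by
  rw [← mk_starCenter_starLeaf B e, ← mk_starCenter_starLeaf B f, hc, hl]

theorem IsEOPSet.starCenter_eq (hB : IsEOPSet K B) (he : e ∈ B) (hf : f ∈ B) (hef : e ≠ f)
    {v : V} (hve : v ∈ e) (hvf : v ∈ f) : starCenter B e = v := by
  have h : ∃ p : V × V, s(p.1, p.2) = e ∧ ∃ f ∈ B, f ≠ e ∧ p.1 ∈ f :=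
    ⟨(v, Sym2.Mem.other hve), Sym2.other_spec hve, f, hf, hef.symm, hvf⟩
  obtain ⟨hp, f', hf', hf'e, hpf'⟩ := h.choose_spec
  have hpe : h.choose.1 ∈ e := by
    have := Sym2.mem_mk_left h.choose.1 h.choose.2
    rwa [hp] at this
  rw [starCenter, orient, dif_pos h]
  exact hB.eq_of_mem_of_mem he hf' hf hf'e hef.symm hpe hpf' hve hvf

theorem IsEOPSet.adj_starCenter_starLeaf (hB : IsEOPSet K B) (he : e ∈ B) :
    K.Adj (starCenter B e) (starLeaf B e) := by
  rw [← SimpleGraph.mem_edgeSet, mk_starCenter_starLeaf]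
  exact hB.1 he

theorem IsEOPSet.not_adj_starLeaf (hB : IsEOPSet K B) (he : e ∈ B) (hf : f ∈ B) (hef : e ≠ f)
    (hc : starCenter B e = starCenter B f) : ¬K.Adj (starLeaf B e) (starLeaf B f) := by
  intro hadj
  rcases hB.mem_or_mem_of_adj_s13 he hf (starLeaf_mem B e) (starLeaf_mem B f) hadj with h | h
  · exact (hB.adj_starCenter_starLeaf he).ne (hB.starCenter_eq he hf hef (starLeaf_mem B e) h)
  · exact (hB.adj_starCenter_starLeaf hf).ne
      (hc ▸ hB.starCenter_eq hf he hef.symm (starLeaf_mem B f) h)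

end EdgeOpenPacking

section Products

variable {V W : Type*} {G : SimpleGraph V} {H : SimpleGraph W}

theorem strongProd_le_lexProd : strongProd G H ≤ lexProd G H := by
  rintro x y ⟨hne, hg | hg, hh | hh⟩
  · exact absurd (Prod.ext hg hh) hne
  · exact Or.inr ⟨hg, hh⟩
  · exact Or.inl hg
  · exact Or.inl hg

theorem boxProd_le_strongProd : G.boxProd H ≤ strongProd G H := by
  rintro x y (⟨hg, hh⟩ | ⟨hh, hg⟩)
  · exact ⟨fun h => hg.ne (congrArg Prod.fst h), Or.inr hg, Or.inl hh⟩
  · exact ⟨fun h => hh.ne (congrArg Prod.snd h), Or.inl hg, Or.inr hh⟩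

theorem strongProd_layer_pair {g g₁ g₂ : V} {a b : W} (hg₁ : g ≠ g₁) (hab : ¬H.Adj a b)
    (hg₁₂ : ¬G.Adj g₁ g₂) (hne : g₁ = g₂ → a ≠ b) :
    EOPSeparated (strongProd G H) s((g, a), (g₁, a)) s((g, b), (g₂, b)) := by
  constructor
  · rw [Ne, Sym2.eq_iff]
    rintro (⟨-, h₂⟩ | ⟨-, h₂⟩)
    · exact hne (congrArg Prod.fst h₂) (congrArg Prod.snd h₂)
    · exact hg₁ (congrArg Prod.fst h₂).symm
  -- an adjacency forces `a = b`; then it joins the centre to a leaf, or the two leaves `g₁ ≠ g₂`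
  · simp only [Sym2.mem_iff]
    rintro x (rfl | rfl) y (rfl | rfl) ⟨hxy, hg, hh⟩ <;> aesop

theorem eopSeparated_strongProd_of_not_fst_eq_or_adj {e f : Sym2 (V × W)}
    (h : ∀ x ∈ e, ∀ y ∈ f, ¬(x.1 = y.1 ∨ G.Adj x.1 y.1)) : EOPSeparated (strongProd G H) e f :=
  ⟨fun hef => h _ (Sym2.out_fst_mem e) _ (hef ▸ Sym2.out_fst_mem e) (Or.inl rfl),
    fun x hx y hy hxy => (h x hx y hy hxy.2.1).elim⟩

variable {B : Finset (Sym2 (V × W))} {e f : Sym2 (V × W)}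

theorem IsEOPSet.adj_fst_starCenter_starLeaf (hB : IsEOPSet (lexProd G H) ↑B) (he : e ∈ B)
    (hcross : (starCenter ↑B e).1 ≠ (starLeaf ↑B e).1) :
    G.Adj (starCenter ↑B e).1 (starLeaf ↑B e).1 :=
  (hB.adj_starCenter_starLeaf he).resolve_right fun h => hcross h.1

theorem IsEOPSet.not_fst_eq_or_adj_of_starCenter_ne (hB : IsEOPSet (lexProd G H) ↑B) (he : e ∈ B)
    (hf : f ∈ B) (hcross : (starCenter ↑B e).1 ≠ (starLeaf ↑B e).1)
    (hc : starCenter ↑B e ≠ starCenter ↑B f) {x y : V × W} (hx : x ∈ e) (hy : y ∈ f) :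
    ¬(x.1 = y.1 ∨ G.Adj x.1 y.1) := by
  have hef : e ≠ f := fun h => hc (h ▸ rfl)
  have hdisj : ∀ z ∈ e, z ∉ f := fun z hze hzf =>
    hc ((hB.starCenter_eq he hf hef hze hzf).trans (hB.starCenter_eq hf he hef.symm hzf hze).symm)
  have hfar : ∀ z ∈ e, ¬G.Adj z.1 y.1 := fun z hz hadj =>
    (hB.mem_or_mem_of_adj_s13 he hf hz hy (Or.inl hadj)).elim (hdisj z hz) (fun hye => hdisj y hye hy)
  have hG := hB.adj_fst_starCenter_starLeaf he hcross
  rintro (hxy | hxy)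
  · rcases (mem_iff_eq_starCenter_or_eq_starLeaf (B := ↑B)).mp hx with rfl | rfl
    · exact hfar _ (starLeaf_mem _ e) (hxy ▸ hG.symm)
    · exact hfar _ (starCenter_mem _ e) (hxy ▸ hG)
  · exact hfar x hx hxy

theorem IsEOPSet.starCenter_ne_of_fst_eq (hB : IsEOPSet (lexProd G H) ↑B) (he : e ∈ B)
    (hf : f ∈ B) (hcross : (starCenter ↑B e).1 ≠ (starLeaf ↑B e).1)
    (hflat : (starCenter ↑B f).1 = (starLeaf ↑B f).1) : starCenter ↑B e ≠ starCenter ↑B f := by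
  intro hc
  have hef : e ≠ f := by rintro rfl; exact hcross hflat
  refine hB.not_adj_starLeaf he hf hef hc (Or.inl ?_)
  rw [← hflat, ← hc]
  exact (hB.adj_fst_starCenter_starLeaf he hcross).symm

open Classical in
noncomputable def leafLevels (B : Finset (Sym2 (V × W))) (c : V × W) (g : V) : Finset W :=
  {e ∈ B | starCenter ↑B e = c ∧ (starLeaf ↑B e).1 = g}.image fun e => (starLeaf ↑B e).2

theorem starLeaf_snd_mem_leafLevels (he : e ∈ B) :
    (starLeaf ↑B e).2 ∈ leafLevels B (starCenter ↑B e) (starLeaf ↑B e).1 := by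
  classical
  simp only [leafLevels, Finset.mem_image, Finset.mem_filter]
  exact ⟨e, ⟨he, rfl, rfl⟩, rfl⟩

theorem IsEOPSet.not_adj_of_mem_leafLevels (hB : IsEOPSet (lexProd G H) ↑B) {c : V × W} {g : V}
    {a b : W} (ha : a ∈ leafLevels B c g) (hb : b ∈ leafLevels B c g) : ¬H.Adj a b := by
  classical
  simp only [leafLevels, Finset.mem_image, Finset.mem_filter] at ha hb
  obtain ⟨e, ⟨he, hce, hge⟩, rfl⟩ := ha
  obtain ⟨f, ⟨hf, hcf, hgf⟩, rfl⟩ := hb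
  intro hadj
  have hef : e ≠ f := by rintro rfl; exact hadj.ne rfl
  exact hB.not_adj_starLeaf he hf hef (hce.trans hcf.symm) (Or.inr ⟨hge.trans hgf.symm, hadj⟩)

theorem exists_forall_card_leafLevels_le (B : Finset (Sym2 (V × W))) (c : V × W) :
    ∃ g, ∀ g', (leafLevels B c g').card ≤ (leafLevels B c g).card := by
  have hbdd : BddAbove (Set.range fun g => (leafLevels B c g).card) := by
    refine ⟨B.card, ?_⟩
    rintro _ ⟨g, rfl⟩
    classical
    exact Finset.card_image_le.trans (Finset.card_filter_le _ _)
  obtain ⟨g, hg⟩ := Nat.sSup_mem (Set.range_nonempty_iff_nonempty.mpr ⟨c.1⟩) hbdd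
  exact ⟨g, fun g' => (le_csSup hbdd ⟨g', rfl⟩).trans_eq hg.symm⟩

theorem Finset.exists_mapsTo_injOn_of_card_le {α β : Type*} [Nonempty β] {s : Finset α}
    {t : Finset β} (h : s.card ≤ t.card) : ∃ f : α → β, Set.MapsTo f s t ∧ Set.InjOn f s := by
  obtain ⟨f, hst, hinj⟩ := s.finite_toSet.exists_injOn_of_encard_le
    (t := (t : Set β)) (by simpa using h)
  exact ⟨f, hst, hinj⟩

def IsStarLevelling (H : SimpleGraph W) (B : Finset (Sym2 (V × W))) (a : Sym2 (V × W) → W) :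
    Prop :=
  (∀ e ∈ B, ∀ f ∈ B, starCenter ↑B e = starCenter ↑B f → ¬H.Adj (a e) (a f)) ∧
    ∀ e ∈ B, ∀ f ∈ B, starCenter ↑B e = starCenter ↑B f →
      (starLeaf ↑B e).1 = (starLeaf ↑B f).1 → a e = a f → e = f

theorem IsEOPSet.exists_isStarLevelling (hB : IsEOPSet (lexProd G H) ↑B) :
    ∃ a, IsStarLevelling H B a := by
  choose top htop using exists_forall_card_leafLevels_le B
  have hinj : ∀ (c : V × W) (g : V), ∃ ι : W → W,
      Set.MapsTo ι (leafLevels B c g) (leafLevels B c (top c)) ∧ Set.InjOn ι (leafLevels B c g) :=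
    fun c g => haveI : Nonempty W := ⟨c.2⟩; Finset.exists_mapsTo_injOn_of_card_le (htop c g)
  choose ι hιmaps hιinj using hinj
  have hmem : ∀ e ∈ B, ι (starCenter ↑B e) (starLeaf ↑B e).1 (starLeaf ↑B e).2 ∈
      leafLevels B (starCenter ↑B e) (top (starCenter ↑B e)) := fun e he =>
    hιmaps _ _ (starLeaf_snd_mem_leafLevels he)
  refine ⟨fun e => ι (starCenter ↑B e) (starLeaf ↑B e).1 (starLeaf ↑B e).2, ?_, ?_⟩
  · intro e he f hf hc
    exact hB.not_adj_of_mem_leafLevels (hmem e he) (hc ▸ hmem f hf)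
  · intro e he f hf hc hg hι
    refine eq_of_starCenter_eq_of_starLeaf_eq hc (Prod.ext hg ?_)
    have hf' := starLeaf_snd_mem_leafLevels hf
    rw [← hc, ← hg] at hf'
    refine hιinj _ _ (starLeaf_snd_mem_leafLevels he) hf' ?_
    simpa only [hc, hg] using hι

open Classical in
noncomputable def layerEdge (B : Finset (Sym2 (V × W))) (a : Sym2 (V × W) → W)
    (e : Sym2 (V × W)) : Sym2 (V × W) :=
  if (starCenter ↑B e).1 = (starLeaf ↑B e).1 then e
  else s(((starCenter ↑B e).1, a e), ((starLeaf ↑B e).1, a e))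

variable {a : Sym2 (V × W) → W}

theorem layerEdge_of_fst_eq (h : (starCenter ↑B e).1 = (starLeaf ↑B e).1) :
    layerEdge B a e = e := if_pos h

theorem layerEdge_of_fst_ne (h : (starCenter ↑B e).1 ≠ (starLeaf ↑B e).1) :
    layerEdge B a e = s(((starCenter ↑B e).1, a e), ((starLeaf ↑B e).1, a e)) := if_neg h

theorem exists_mem_fst_eq_of_mem_layerEdge {x : V × W} (hx : x ∈ layerEdge B a e) :
    ∃ z ∈ e, z.1 = x.1 := by
  by_cases h : (starCenter ↑B e).1 = (starLeaf ↑B e).1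
  · rw [layerEdge_of_fst_eq h] at hx
    exact ⟨x, hx, rfl⟩
  · rw [layerEdge_of_fst_ne h, Sym2.mem_iff] at hx
    rcases hx with rfl | rfl
    · exact ⟨_, starCenter_mem _ e, rfl⟩
    · exact ⟨_, starLeaf_mem _ e, rfl⟩

theorem IsEOPSet.layerEdge_mem_edgeSet (hB : IsEOPSet (lexProd G H) ↑B) (he : e ∈ B) :
    layerEdge B a e ∈ (G.boxProd H).edgeSet := by
  by_cases h : (starCenter ↑B e).1 = (starLeaf ↑B e).1
  · rw [layerEdge_of_fst_eq h, ← mk_starCenter_starLeaf (↑B) e, SimpleGraph.mem_edgeSet]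
    exact Or.inr ⟨((hB.adj_starCenter_starLeaf he).resolve_left fun hG => hG.ne h).2, h⟩
  · rw [layerEdge_of_fst_ne h, SimpleGraph.mem_edgeSet]
    exact Or.inl ⟨hB.adj_fst_starCenter_starLeaf he h, rfl⟩

theorem IsEOPSet.not_layerEdge_fst_eq_or_adj (hB : IsEOPSet (lexProd G H) ↑B) (he : e ∈ B)
    (hf : f ∈ B)
    (hcross : (starCenter ↑B e).1 ≠ (starLeaf ↑B e).1) (hc : starCenter ↑B e ≠ starCenter ↑B f) :
    ∀ x ∈ layerEdge B a e, ∀ y ∈ layerEdge B a f, ¬(x.1 = y.1 ∨ G.Adj x.1 y.1) := by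
  intro x hx y hy
  obtain ⟨z, hz, hzx⟩ := exists_mem_fst_eq_of_mem_layerEdge hx
  obtain ⟨z', hz', hzy⟩ := exists_mem_fst_eq_of_mem_layerEdge hy
  rw [← hzx, ← hzy]
  exact hB.not_fst_eq_or_adj_of_starCenter_ne he hf hcross hc hz hz'

theorem IsEOPSet.eopSeparated_layerEdge (hB : IsEOPSet (lexProd G H) ↑B)
    (ha : IsStarLevelling H B a) (he : e ∈ B) (hf : f ∈ B) (hef : e ≠ f) :
    EOPSeparated (strongProd G H) (layerEdge B a e) (layerEdge B a f) := by
  by_cases hce : (starCenter ↑B e).1 = (starLeaf ↑B e).1 <;>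
    by_cases hcf : (starCenter ↑B f).1 = (starLeaf ↑B f).1
  · rw [layerEdge_of_fst_eq hce, layerEdge_of_fst_eq hcf]
    exact (hB.eopSeparated he hf hef).anti strongProd_le_lexProd
  · exact (eopSeparated_strongProd_of_not_fst_eq_or_adj
      (hB.not_layerEdge_fst_eq_or_adj hf he hcf (hB.starCenter_ne_of_fst_eq hf he hcf hce))).symm
  · exact eopSeparated_strongProd_of_not_fst_eq_or_adj
      (hB.not_layerEdge_fst_eq_or_adj he hf hce (hB.starCenter_ne_of_fst_eq he hf hce hcf))
  by_cases hc : starCenter ↑B e = starCenter ↑B f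
  · rw [layerEdge_of_fst_ne hce, layerEdge_of_fst_ne hcf, ← hc]
    exact strongProd_layer_pair hce (ha.1 e he f hf hc)
      (fun hG => hB.not_adj_starLeaf he hf hef hc (Or.inl hG))
      (fun hg hab => hef (ha.2 e he f hf hc hg hab))
  · exact eopSeparated_strongProd_of_not_fst_eq_or_adj (hB.not_layerEdge_fst_eq_or_adj he hf hce hc)

theorem IsEOPSet.exists_strongProd_boxProd (hB : IsEOPSet (lexProd G H) ↑B) :
    ∃ B' : Finset (Sym2 (V × W)), IsEOPSet (strongProd G H) ↑B' ∧
      IsEOPSet (G.boxProd H) ↑B' ∧ B'.card = B.card := by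
  classical
  obtain ⟨a, ha⟩ := hB.exists_isStarLevelling
  have hsep : (↑B : Set (Sym2 (V × W))).Pairwise fun e f =>
      EOPSeparated (strongProd G H) (layerEdge B a e) (layerEdge B a f) :=
    fun e he f hf hef => hB.eopSeparated_layerEdge ha he hf hef
  have hbox : layerEdge B a '' ↑B ⊆ (G.boxProd H).edgeSet := by
    rintro _ ⟨e, he, rfl⟩
    exact hB.layerEdge_mem_edgeSet he
  have hstrong := hsep.isEOPSet_image (hbox.trans (SimpleGraph.edgeSet_mono boxProd_le_strongProd))
  refine ⟨B.image (layerEdge B a), ?_, ?_, Finset.card_image_of_injOn hsep.injOn_of_eopSeparated⟩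
  · rwa [Finset.coe_image]
  · rw [Finset.coe_image]
    exact hstrong.anti boxProd_le_strongProd hbox

end Products

theorem eopNum_le_eopNum {V V' : Type*} [Fintype V'] {K : SimpleGraph V}
    {K' : SimpleGraph V'}
    (h : ∀ B : Finset (Sym2 V), IsEOPSet K ↑B →
      ∃ B' : Finset (Sym2 V'), IsEOPSet K' ↑B' ∧ B.card ≤ B'.card) :
    eopNum K ≤ eopNum K' := by
  have hbdd : BddAbove {n | ∃ B' : Finset (Sym2 V'), IsEOPSet K' ↑B' ∧ B'.card = n} :=
    ⟨Fintype.card (Sym2 V'), by rintro _ ⟨B', -, rfl⟩; exact Finset.card_le_univ B'⟩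
  refine csSup_le ⟨0, ∅, by simp [IsEOPSet], rfl⟩ ?_
  rintro _ ⟨B, hB, rfl⟩
  obtain ⟨B', hB', hcard⟩ := h B hB
  exact hcard.trans (le_csSup hbdd ⟨B', hB', rfl⟩)

/-- For arbitrary graphs `G` and `H`, `ρₑᵒ(G ∘ H) ≤ min{ρₑᵒ(G ⊠ H), ρₑᵒ(G □ H)}`. -/
theorem stmt_13 {V W : Type*} [Fintype V] [Fintype W]
    (G : SimpleGraph V) (H : SimpleGraph W) :
    eopNum (lexProd G H) ≤ min (eopNum (strongProd G H)) (eopNum (G.boxProd H)) := by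
  refine le_min (eopNum_le_eopNum fun B hB => ?_) (eopNum_le_eopNum fun B hB => ?_)
  · obtain ⟨B', hstrong, -, hcard⟩ := hB.exists_strongProd_boxProd
    exact ⟨B', hstrong, hcard.ge⟩
  · obtain ⟨B', -, hbox, hcard⟩ := hB.exists_strongProd_boxProd
    exact ⟨B', hbox, hcard.ge⟩
end

section
/- If n = 2^k for some k ≥ 1, then the edge open packing number of the n-dimensional hypercube satisfies ρ_e^o(Q_n) = 2^{n−1}. -/
open SimpleGraph

/-!
Upper bound: every edge of an edge open packing `B` has an endvertex lying on no other edge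
of `B`, and these private endvertices form an independent set, which in `Q_n` has at most
`2^(n-1)` vertices because `v ↦ v + e₀` maps it injectively onto a disjoint set.

Lower bound: let `C` be the extended Hamming code of length `n = 2^k`, with minimum distance
`4` and `2^(n-k-1)` codewords. The `n·|C| = 2^(n-1)` edges at the codewords form an edge open
packing: the endvertices of edges at distinct codewords are at distance at least `2`, and two
distinct neighbours of one codeword are at distance `2`.

`Bool` plays the role of `𝔽₂` (Mathlib's `BooleanRing Bool`, where `+` is `xor`), so
`v + Pi.single i 1` is `v` with its `i`-th coordinate flipped.
-/

open Finset Function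

instance : CharP Bool 2 := charP_of_card_eq_prime rfl

section EdgeOpenPacking

variable {V : Type*} {G : SimpleGraph V}

theorem IsEOPSet.exists_mem_forall_mem_eq {B : Set (Sym2 V)} (hB : IsEOPSet G B) {e : Sym2 V}
    (he : e ∈ B) : ∃ x ∈ e, ∀ e' ∈ B, x ∈ e' → e' = e := by
  induction e using Sym2.ind with
  | _ a b =>
  have hab : G.Adj a b := hB.1 he
  by_contra! hcon
  obtain ⟨e₁, he₁, ha, hne₁⟩ := hcon a (Sym2.mem_mk_left a b)
  obtain ⟨e₂, he₂, hb, hne₂⟩ := hcon b (Sym2.mem_mk_right a b)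
  by_cases h₁₂ : e₁ = e₂
  · subst h₁₂
    exact hne₁ ((Sym2.mem_and_mem_iff hab.ne).mp ⟨ha, hb⟩)
  · rcases hB.2 e₁ he₁ e₂ he₂ h₁₂ a ha b hb hab with h | h
    · exact hne₁ h.symm
    · exact hne₂ h.symm

theorem IsEOPSet.exists_isIndepSet_card_eq [DecidableEq V] {B : Finset (Sym2 V)}
    (hB : IsEOPSet G B) : ∃ S : Finset V, G.IsIndepSet S ∧ S.card = B.card := by
  have hpriv : ∀ e, ∃ x, e ∈ B → x ∈ e ∧ ∀ e' ∈ B, x ∈ e' → e' = e := by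
    intro e
    by_cases he : e ∈ B
    · obtain ⟨x, hx, h⟩ := hB.exists_mem_forall_mem_eq he
      exact ⟨x, fun _ => ⟨hx, h⟩⟩
    · exact ⟨e.out.1, fun h => absurd h he⟩
  choose f hf using hpriv
  have hinj : Set.InjOn f B := fun e he e' he' h =>
    (hf e' he').2 e he (h ▸ (hf e he).1)
  refine ⟨B.image f, ?_, card_image_of_injOn hinj⟩
  rintro _ hx _ hy hxy hadj
  simp only [coe_image, Set.mem_image, mem_coe] at hx hy
  obtain ⟨e, he, rfl⟩ := hx
  obtain ⟨e', he', rfl⟩ := hy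
  have hne : e ≠ e' := by rintro rfl; exact hxy rfl
  rcases hB.2 e he e' he' hne _ (hf e he).1 _ (hf e' he').1 hadj with h | h
  · exact hne ((hf e' he').2 e he (h ▸ Sym2.mem_mk_right _ _))
  · exact hne ((hf e he).2 e' he' (h ▸ Sym2.mem_mk_left _ _)).symm

theorem SimpleGraph.IsIndepSet.two_mul_card_le_card [Fintype V] [DecidableEq V] {S : Finset V}
    (hS : G.IsIndepSet S) {f : V → V} (hf : Injective f) (hadj : ∀ v, G.Adj v (f v)) :
    2 * S.card ≤ Fintype.card V := by
  have hdisj : Disjoint S (S.image f) := by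
    rw [Finset.disjoint_left]
    rintro _ hv hfv
    obtain ⟨v, hv', rfl⟩ := mem_image.mp hfv
    exact hS hv' hv (hadj v).ne (hadj v)
  calc 2 * S.card = (S ∪ S.image f).card := by
        rw [card_union_of_disjoint hdisj, card_image_of_injective _ hf, two_mul]
    _ ≤ Fintype.card V := card_le_univ _

theorem IsEOPSet.two_mul_card_le_card [Fintype V] [DecidableEq V] {B : Finset (Sym2 V)}
    (hB : IsEOPSet G B) {f : V → V} (hf : Injective f) (hadj : ∀ v, G.Adj v (f v)) :
    2 * B.card ≤ Fintype.card V := by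
  obtain ⟨S, hS, hcard⟩ := hB.exists_isIndepSet_card_eq
  exact hcard ▸ hS.two_mul_card_le_card hf hadj

end EdgeOpenPacking

theorem AddMonoidHom.card_ker_mul_card_of_surjective {G H : Type*} [AddGroup G] [AddGroup H]
    (f : G →+ H) (hf : Surjective f) : Nat.card f.ker * Nat.card H = Nat.card G := by
  rw [← AddSubgroup.card_top (G := H), ← AddMonoidHom.range_eq_top.mpr hf,
    ← AddSubgroup.index_ker, AddSubgroup.card_mul_index]

section ExtendedHammingCode

variable {ι W : Type*} [Fintype ι] [AddCommGroup W] [Module Bool W]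

def extendedParityCheck (col : ι → W) : (ι → Bool) →ₗ[Bool] Bool × W :=
  Fintype.linearCombination Bool fun p => (1, col p)

theorem neg_eq_self_of_module_bool (w : W) : -w = w := by
  rw [← neg_one_smul Bool w, show (-1 : Bool) = 1 from rfl, one_smul]

theorem four_le_hammingNorm_of_extendedParityCheck_eq_zero {col : ι → W} (hcol : Injective col)
    {x : ι → Bool} (hx : x ≠ 0) (h : extendedParityCheck col x = 0) : 4 ≤ hammingNorm x := by
  classical
  set S := univ.filter fun p => x p ≠ 0
  have hxS : ∀ p, x p = if p ∈ S then 1 else 0 := by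
    intro p
    simp only [S, mem_filter, mem_univ, true_and]
    generalize x p = b
    revert b; decide
  have hsum : ∑ p ∈ S, ((1 : Bool), col p) = 0 := by
    rw [← h, extendedParityCheck, Fintype.linearCombination_apply]
    simp only [hxS, ite_smul, one_smul, zero_smul, sum_ite_mem, univ_inter]
  have hne : S.card ≠ 0 := by
    rw [Ne, card_eq_zero, filter_eq_empty_iff]; contrapose! hx; ext p; exact hx (mem_univ p)
  have heven : 2 ∣ S.card := by
    have := congrArg Prod.fst hsum
    simp only [Prod.fst_sum, sum_const, nsmul_eq_mul, mul_one, Prod.fst_zero] at this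
    exact (CharP.cast_eq_zero_iff Bool 2 _).mp this
  have hne2 : S.card ≠ 2 := by
    intro h2
    obtain ⟨p, q, hpq, hS⟩ := card_eq_two.mp h2
    have := congrArg Prod.snd hsum
    rw [hS, sum_pair hpq] at this
    exact hpq (hcol (by simpa [neg_eq_self_of_module_bool] using eq_neg_of_add_eq_zero_left this))
  change 4 ≤ S.card
  omega

theorem extendedParityCheck_surjective [DecidableEq ι] {col : ι → W} (hcol : Surjective col) :
    Surjective (extendedParityCheck col) := by
  have hsingle : ∀ r, extendedParityCheck col (Pi.single r 1) = (1, col r) := fun r => by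
    simp [extendedParityCheck]
  rintro ⟨b, w⟩
  obtain ⟨p, rfl⟩ := hcol w
  obtain ⟨q, hq⟩ := hcol 0
  cases b
  · refine ⟨Pi.single p 1 + Pi.single q 1, ?_⟩
    rw [map_add, hsingle, hsingle, hq, Prod.mk_add_mk, add_zero]
    rfl
  · exact ⟨Pi.single p 1, hsingle p⟩

def extendedHammingCode [DecidableEq ι] [DecidableEq W] (col : ι → W) : Finset (ι → Bool) :=
  univ.filter fun x => extendedParityCheck col x = 0

theorem card_extendedHammingCode_mul [DecidableEq ι] [DecidableEq W] [Fintype W] {col : ι → W}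
    (hcol : Surjective col) :
    (extendedHammingCode col).card * (2 * Fintype.card W) = 2 ^ Fintype.card ι := by
  have hker : Nat.card (extendedParityCheck col).toAddMonoidHom.ker
      = (extendedHammingCode col).card := by
    rw [← Nat.card_eq_finsetCard]
    exact Nat.card_congr (Equiv.subtypeEquivRight fun x => by simp [extendedHammingCode])
  have := (extendedParityCheck col).toAddMonoidHom.card_ker_mul_card_of_surjective
    (extendedParityCheck_surjective hcol)
  rw [hker] at this
  simpa using this

theorem four_le_hammingDist_of_mem_extendedHammingCode [DecidableEq ι] [DecidableEq W]
    {col : ι → W} (hcol : Injective col) {x y : ι → Bool} (hx : x ∈ extendedHammingCode col)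
    (hy : y ∈ extendedHammingCode col) (hxy : x ≠ y) : 4 ≤ hammingDist x y := by
  simp only [extendedHammingCode, mem_filter, mem_univ, true_and] at hx hy
  rw [hammingDist_eq_hammingNorm]
  exact four_le_hammingNorm_of_extendedParityCheck_eq_zero hcol (neg_add_eq_zero.not.mpr hxy)
    (by rw [map_add, map_neg, hx, hy, neg_zero, add_zero])

end ExtendedHammingCode

section Hypercube

variable {n : ℕ}

theorem hypercube_adj {x y : Fin n → Bool} : (hypercube n).Adj x y ↔ hammingDist x y = 1 := by
  rw [hypercube, fromRel_adj, ← hammingDist_ne_zero]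
  change _ ∧ (hammingDist x y = 1 ∨ hammingDist y x = 1) ↔ _
  rw [hammingDist_comm y x]
  omega

theorem hammingDist_add_single (v : Fin n → Bool) (i : Fin n) :
    hammingDist v (v + Pi.single i 1) = 1 := by
  rw [hammingDist_eq_hammingNorm, neg_add_cancel_left]
  simp [hammingNorm, Pi.single_apply, filter_eq']

theorem hammingDist_add_single_add_single (v : Fin n → Bool) {i j : Fin n} (hij : i ≠ j) :
    hammingDist (v + Pi.single i 1) (v + Pi.single j 1) = 2 := by
  rw [hammingDist_eq_hammingNorm, show -(v + Pi.single i 1) + (v + Pi.single j 1)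
    = -Pi.single i 1 + Pi.single j 1 by abel, ← hammingDist_eq_hammingNorm]
  have hsupp : (univ.filter fun k =>
      (Pi.single i 1 : Fin n → Bool) k ≠ (Pi.single j 1 : Fin n → Bool) k) = {i, j} := by
    ext k
    by_cases hi : k = i <;> by_cases hj : k = j <;> simp_all [Pi.single_apply]
  rw [hammingDist, hsupp, card_pair hij]

theorem hypercube_adj_add_single (v : Fin n → Bool) (i : Fin n) :
    (hypercube n).Adj v (v + Pi.single i 1) :=
  hypercube_adj.mpr (hammingDist_add_single v i)

def starEdges (C : Finset (Fin n → Bool)) : Finset (Sym2 (Fin n → Bool)) :=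
  (C ×ˢ univ).image fun p => s(p.1, p.1 + Pi.single p.2 1)

theorem mem_starEdges {C : Finset (Fin n → Bool)} {e : Sym2 (Fin n → Bool)} :
    e ∈ starEdges C ↔ ∃ c ∈ C, ∃ i, s(c, c + Pi.single i 1) = e := by
  simp [starEdges]

theorem hammingDist_le_one_of_mem {c x : Fin n → Bool} {i : Fin n}
    (hx : x ∈ s(c, c + Pi.single i 1)) : hammingDist c x ≤ 1 := by
  rcases Sym2.mem_iff.mp hx with rfl | rfl
  · simp
  · exact (hammingDist_add_single c i).le

variable {C : Finset (Fin n → Bool)}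
  (hC : (C : Set (Fin n → Bool)).Pairwise fun c c' => 4 ≤ hammingDist c c')
include hC

theorem card_starEdges : (starEdges C).card = C.card * n := by
  rw [starEdges, card_image_of_injOn, card_product, card_univ, Fintype.card_fin]
  rintro ⟨c, i⟩ hci ⟨c', j⟩ hcj h
  simp only [coe_product, Set.mem_prod, mem_coe] at hci hcj
  rcases Sym2.eq_iff.mp h with ⟨rfl, h⟩ | ⟨h, -⟩
  · by_contra hij
    have := hammingDist_add_single_add_single c (mt (congrArg (Prod.mk c)) hij)
    simp_all
  · dsimp only at h
    have hdist : hammingDist c c' = 1 := by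
      rw [hammingDist_comm, h, hammingDist_add_single]
    have := hC hci.1 hcj.1 (hammingDist_ne_zero.mp (by omega))
    omega

theorem isEOPSet_starEdges : IsEOPSet (hypercube n) (starEdges C) := by
  refine ⟨?_, ?_⟩
  · intro e he
    obtain ⟨c, -, i, rfl⟩ := mem_starEdges.mp he
    exact hypercube_adj_add_single c i
  intro e₁ he₁ e₂ he₂ hne x hx y hy hxy
  obtain ⟨c₁, hc₁, i, rfl⟩ := mem_starEdges.mp he₁
  obtain ⟨c₂, hc₂, j, rfl⟩ := mem_starEdges.mp he₂
  by_cases hc : c₁ = c₂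
  · subst hc
    rcases Sym2.mem_iff.mp hx with rfl | rfl <;> rcases Sym2.mem_iff.mp hy with rfl | rfl
    · exact absurd hxy (hypercube n).irrefl
    · exact Or.inr rfl
    · exact Or.inl Sym2.eq_swap
    · have hij : i ≠ j := by rintro rfl; exact (hypercube n).irrefl hxy
      have := hypercube_adj.mp hxy
      rw [hammingDist_add_single_add_single _ hij] at this
      omega
  · have h₁ := hammingDist_le_one_of_mem hx
    have h₂ := hammingDist_le_one_of_mem hy
    rw [hammingDist_comm] at h₂
    have := hypercube_adj.mp hxy
    have := hC hc₁ hc₂ hc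
    have := hammingDist_triangle c₁ x c₂
    have := hammingDist_triangle x y c₂
    omega

end Hypercube

theorem exists_card_mul_eq_pairwise_four_le_hammingDist (k : ℕ) :
    ∃ C : Finset (Fin (2 ^ k) → Bool), C.card * 2 ^ (k + 1) = 2 ^ 2 ^ k ∧
      (C : Set (Fin (2 ^ k) → Bool)).Pairwise fun c c' => 4 ≤ hammingDist c c' := by
  let col : Fin (2 ^ k) ≃ (Fin k → Bool) := (Fintype.equivFinOfCardEq (by simp)).symm
  refine ⟨extendedHammingCode col, ?_, fun c hc c' hc' hne =>
    four_le_hammingDist_of_mem_extendedHammingCode col.injective hc hc' hne⟩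
  simpa [pow_succ, mul_comm 2] using card_extendedHammingCode_mul col.surjective

theorem stmt_18_general (k : ℕ) :
    eopNum (hypercube (2 ^ k)) = 2 ^ (2 ^ k - 1) := by
  have hpow : 2 ^ 2 ^ k = 2 * 2 ^ (2 ^ k - 1) := by
    rw [← pow_succ', Nat.sub_add_cancel Nat.one_le_two_pow]
  obtain ⟨C, hCcard, hC⟩ := exists_card_mul_eq_pairwise_four_le_hammingDist k
  refine IsGreatest.csSup_eq ⟨⟨starEdges C, isEOPSet_starEdges hC, ?_⟩, ?_⟩
  · have : 2 * (starEdges C).card = 2 ^ 2 ^ k := by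
      rw [card_starEdges hC, ← hCcard]
      ring
    omega
  · rintro m ⟨B, hB, rfl⟩
    have := hB.two_mul_card_le_card (add_left_injective (Pi.single ⟨0, Nat.two_pow_pos k⟩ 1))
      (hypercube_adj_add_single · _)
    rw [Fintype.card_fun, Fintype.card_bool, Fintype.card_fin] at this
    omega

/-- If `n = 2^k` for some `k ≥ 1`, then `ρₑᵒ(Q_n) = 2^(n−1)`. -/
theorem stmt_18 (k : ℕ) (hk : 1 ≤ k) :
    eopNum (hypercube (2 ^ k)) = 2 ^ (2 ^ k - 1) :=
  stmt_18_general k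
end
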